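/- arXiv:1802.01383 — 4 statements merged into one kernel-verified Lean document; each statement's English description precedes it below -/
import Mathlib

section
/- For every n ≥ 5, the commutator subgroup WB_n' of the welded braid group WB_n is perfect: the commutator subgroup of WB_n' equals WB_n' itself (WB_n'' = WB_n'). -/
/-!
Common setup: the virtual braid group `VB n` and the welded braid group `WB n`
as presented groups, together with the distinguished elements of their
commutator subgroups used in the paper
"Commutator subgroups of virtual and welded braid groups".

Generators: for `i : Fin (n-1)`, `Sum.inl i` represents σ_{i+1} and
`Sum.inr i` represents ρ_{i+1}.
-/

/-- The generating set of `VB n` (and `WB n`). -/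
abbrev VBGen (n : ℕ) := (Fin (n - 1)) ⊕ (Fin (n - 1))

/-- The free group letter σ_i, for `1 ≤ i ≤ n-1` (junk value `1` otherwise). -/
def fσ (n i : ℕ) : FreeGroup (VBGen n) :=
  if h : 1 ≤ i ∧ i - 1 < n - 1 then FreeGroup.of (Sum.inl ⟨i - 1, h.2⟩) else 1

/-- The free group letter ρ_i, for `1 ≤ i ≤ n-1` (junk value `1` otherwise). -/
def fρ (n i : ℕ) : FreeGroup (VBGen n) :=
  if h : 1 ≤ i ∧ i - 1 < n - 1 then FreeGroup.of (Sum.inr ⟨i - 1, h.2⟩) else 1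

/-- The defining relators of the virtual braid group `VB n`. -/
def vbRels (n : ℕ) : Set (FreeGroup (VBGen n)) :=
  {r | ∃ i j, 1 ≤ i ∧ i + 2 ≤ j ∧ j ≤ n - 1 ∧
      (r = fσ n i * fσ n j * (fσ n i)⁻¹ * (fσ n j)⁻¹ ∨
       r = fρ n i * fρ n j * (fρ n i)⁻¹ * (fρ n j)⁻¹ ∨
       r = fσ n i * fρ n j * (fσ n i)⁻¹ * (fρ n j)⁻¹ ∨
       r = fσ n j * fρ n i * (fσ n j)⁻¹ * (fρ n i)⁻¹)} ∪
  {r | ∃ i, 1 ≤ i ∧ i + 1 ≤ n - 1 ∧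
      (r = fσ n i * fσ n (i+1) * fσ n i * (fσ n (i+1))⁻¹ * (fσ n i)⁻¹ * (fσ n (i+1))⁻¹ ∨
       r = fρ n i * fρ n (i+1) * fρ n i * (fρ n (i+1))⁻¹ * (fρ n i)⁻¹ * (fρ n (i+1))⁻¹ ∨
       r = fρ n i * fρ n (i+1) * fσ n i * (fρ n (i+1))⁻¹ * (fρ n i)⁻¹ * (fσ n (i+1))⁻¹)} ∪
  {r | ∃ i, 1 ≤ i ∧ i ≤ n - 1 ∧ r = fρ n i * fρ n i}

/-- The virtual braid group on `n` strands. -/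
abbrev VB (n : ℕ) := PresentedGroup (vbRels n)

/-- The generator σ_i of `VB n`. -/
def vσ (n i : ℕ) : VB n := PresentedGroup.mk (vbRels n) (fσ n i)

/-- The generator ρ_i of `VB n`. -/
def vρ (n i : ℕ) : VB n := PresentedGroup.mk (vbRels n) (fρ n i)

/-- a_m = σ_1^m (ρ_1 σ_1 ρ_1 σ_1⁻¹) σ_1^{-m}. -/
def va (n : ℕ) (m : ℤ) : VB n :=
  (vσ n 1) ^ m * (vρ n 1 * vσ n 1 * vρ n 1 * (vσ n 1)⁻¹) * (vσ n 1) ^ (-m)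

/-- b_{m,ε} = σ_1^m (ρ_1^ε σ_2 ρ_1^ε σ_1⁻¹) σ_1^{-m}. -/
def vb (n : ℕ) (m : ℤ) (ε : ℕ) : VB n :=
  (vσ n 1) ^ m * ((vρ n 1) ^ ε * vσ n 2 * (vρ n 1) ^ ε * (vσ n 1)⁻¹) * (vσ n 1) ^ (-m)

/-- c_l = σ_l σ_1⁻¹. -/
def vc (n l : ℕ) : VB n := vσ n l * (vσ n 1)⁻¹

/-- f_{m,ε} = σ_1^m (ρ_1^ε ρ_2 ρ_1^{ε+1}) σ_1^{-m}; `f_m` is `vf n m 0`. -/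
def vf (n : ℕ) (m : ℤ) (ε : ℕ) : VB n :=
  (vσ n 1) ^ m * ((vρ n 1) ^ ε * vρ n 2 * (vρ n 1) ^ (ε + 1)) * (vσ n 1) ^ (-m)

/-- g_{m,l} = σ_1^m (ρ_l ρ_1) σ_1^{-m}. -/
def vg (n : ℕ) (m : ℤ) (l : ℕ) : VB n :=
  (vσ n 1) ^ m * (vρ n l * vρ n 1) * (vσ n 1) ^ (-m)

/-- The additional relators ρ_i σ_{i+1} σ_i (ρ_{i+1})⁻¹ σ_i⁻¹ σ_{i+1}⁻¹ of the
welded braid group. -/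
def wbExtraRels (n : ℕ) : Set (FreeGroup (VBGen n)) :=
  {r | ∃ i, 1 ≤ i ∧ i + 1 ≤ n - 1 ∧
      r = fρ n i * fσ n (i+1) * fσ n i * (fρ n (i+1))⁻¹ * (fσ n i)⁻¹ * (fσ n (i+1))⁻¹}

/-- The defining relators of the welded braid group `WB n`. -/
def wbRels (n : ℕ) : Set (FreeGroup (VBGen n)) := vbRels n ∪ wbExtraRels n

/-- The welded braid group on `n` strands. -/
abbrev WB (n : ℕ) := PresentedGroup (wbRels n)

/-- The generator σ_i of `WB n`. -/
def wσ (n i : ℕ) : WB n := PresentedGroup.mk (wbRels n) (fσ n i)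

/-- The generator ρ_i of `WB n`. -/
def wρ (n i : ℕ) : WB n := PresentedGroup.mk (wbRels n) (fρ n i)

/-- a_m in `WB n`. -/
def wa (n : ℕ) (m : ℤ) : WB n :=
  (wσ n 1) ^ m * (wρ n 1 * wσ n 1 * wρ n 1 * (wσ n 1)⁻¹) * (wσ n 1) ^ (-m)

/-- f_{m,ε} in `WB n`; `f_m` is `wf n m 0`. -/
def wf (n : ℕ) (m : ℤ) (ε : ℕ) : WB n :=
  (wσ n 1) ^ m * ((wρ n 1) ^ ε * wρ n 2 * (wρ n 1) ^ (ε + 1)) * (wσ n 1) ^ (-m)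

/-- c_l in `WB n`. -/
def wc (n l : ℕ) : WB n := wσ n l * (wσ n 1)⁻¹

/-- g_{m,l} in `WB n`. -/
def wg (n : ℕ) (m : ℤ) (l : ℕ) : WB n :=
  (wσ n 1) ^ m * (wρ n l * wρ n 1) * (wσ n 1) ^ (-m)


/-! ### Auxiliary machinery for the proof -/

namespace WBPerfect

open Subgroup
open scoped commutatorElement

/-- relators map to 1 in the presented group -/
lemma mk_rel_one {n : ℕ} {r : FreeGroup (VBGen n)} (h : r ∈ wbRels n) :
    PresentedGroup.mk (wbRels n) r = 1 :=
  (QuotientGroup.eq_one_iff r).mpr (Subgroup.subset_normalClosure h)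

lemma comm_of_relator {G : Type*} [Group G] {a b : G} (h : a * b * a⁻¹ * b⁻¹ = 1) :
    a * b = b * a :=
  commutatorElement_eq_one_iff_mul_comm.mp (by rw [commutatorElement_def]; exact h)

lemma braid_of_relator {G : Type*} [Group G] {a b : G}
    (h : a * b * a * b⁻¹ * a⁻¹ * b⁻¹ = 1) : a * b * a = b * a * b := by
  have e : a * b * a = (a * b * a * b⁻¹ * a⁻¹ * b⁻¹) * (b * a * b) := by group
  rw [h, one_mul] at e; exact e

/-- σ_i σ_j = σ_j σ_i for j ≥ i+2 -/
lemma rel_ss {n i j : ℕ} (h1 : 1 ≤ i) (h2 : i + 2 ≤ j) (h3 : j ≤ n - 1) :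
    wσ n i * wσ n j = wσ n j * wσ n i := by
  have hmem : fσ n i * fσ n j * (fσ n i)⁻¹ * (fσ n j)⁻¹ ∈ wbRels n :=
    Or.inl (Or.inl (Or.inl ⟨i, j, h1, h2, h3, Or.inl rfl⟩))
  have h0 := mk_rel_one hmem
  simp only [map_mul, map_inv] at h0
  exact comm_of_relator h0

/-- σ_i ρ_j = ρ_j σ_i for j ≥ i+2 -/
lemma rel_sr {n i j : ℕ} (h1 : 1 ≤ i) (h2 : i + 2 ≤ j) (h3 : j ≤ n - 1) :
    wσ n i * wρ n j = wρ n j * wσ n i := by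
  have hmem : fσ n i * fρ n j * (fσ n i)⁻¹ * (fρ n j)⁻¹ ∈ wbRels n :=
    Or.inl (Or.inl (Or.inl ⟨i, j, h1, h2, h3, Or.inr (Or.inr (Or.inl rfl))⟩))
  have h0 := mk_rel_one hmem
  simp only [map_mul, map_inv] at h0
  exact comm_of_relator h0

/-- σ_j ρ_i = ρ_i σ_j for j ≥ i+2 -/
lemma rel_rs {n i j : ℕ} (h1 : 1 ≤ i) (h2 : i + 2 ≤ j) (h3 : j ≤ n - 1) :
    wσ n j * wρ n i = wρ n i * wσ n j := by
  have hmem : fσ n j * fρ n i * (fσ n j)⁻¹ * (fρ n i)⁻¹ ∈ wbRels n :=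
    Or.inl (Or.inl (Or.inl ⟨i, j, h1, h2, h3, Or.inr (Or.inr (Or.inr rfl))⟩))
  have h0 := mk_rel_one hmem
  simp only [map_mul, map_inv] at h0
  exact comm_of_relator h0

/-- braid relation -/
lemma rel_braid {n i : ℕ} (h1 : 1 ≤ i) (h2 : i + 1 ≤ n - 1) :
    wσ n i * wσ n (i+1) * wσ n i = wσ n (i+1) * wσ n i * wσ n (i+1) := by
  have hmem : fσ n i * fσ n (i+1) * fσ n i * (fσ n (i+1))⁻¹ * (fσ n i)⁻¹ * (fσ n (i+1))⁻¹
      ∈ wbRels n :=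
    Or.inl (Or.inl (Or.inr ⟨i, h1, h2, Or.inl rfl⟩))
  have h0 := mk_rel_one hmem
  simp only [map_mul, map_inv] at h0
  have h0' : wσ n i * wσ n (i+1) * wσ n i * (wσ n (i+1))⁻¹ * (wσ n i)⁻¹ * (wσ n (i+1))⁻¹
      = 1 := h0
  exact braid_of_relator h0' 

/-- welded relation ρ_i σ_{i+1} σ_i = σ_{i+1} σ_i ρ_{i+1} -/
lemma rel_welded {n i : ℕ} (h1 : 1 ≤ i) (h2 : i + 1 ≤ n - 1) :
    wρ n i * wσ n (i+1) * wσ n i = wσ n (i+1) * wσ n i * wρ n (i+1) := by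
  have hmem : fρ n i * fσ n (i+1) * fσ n i * (fρ n (i+1))⁻¹ * (fσ n i)⁻¹ * (fσ n (i+1))⁻¹
      ∈ wbRels n :=
    Or.inr ⟨i, h1, h2, rfl⟩
  have h0 := mk_rel_one hmem
  simp only [map_mul, map_inv] at h0
  have h0' : wρ n i * wσ n (i+1) * wσ n i * (wρ n (i+1))⁻¹ * (wσ n i)⁻¹ * (wσ n (i+1))⁻¹
      = 1 := h0
  have e : wρ n i * wσ n (i+1) * wσ n i =
      (wρ n i * wσ n (i+1) * wσ n i * (wρ n (i+1))⁻¹ * (wσ n i)⁻¹ * (wσ n (i+1))⁻¹) *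
        (wσ n (i+1) * wσ n i * wρ n (i+1)) := by group
  rw [h0', one_mul] at e; exact e

/-! ### The quotient by the second commutator subgroup -/

/-- `K = [WB_n', WB_n']` -/
abbrev Kn (n : ℕ) : Subgroup (WB n) := ⁅commutator (WB n), commutator (WB n)⁆

/-- the quotient map `WB n → WB n / K` -/
def qmap (n : ℕ) : WB n →* WB n ⧸ Kn n := QuotientGroup.mk' (Kn n)

lemma qmap_surjective (n : ℕ) : Function.Surjective (qmap n) :=
  QuotientGroup.mk'_surjective _

def qσ (n i : ℕ) : WB n ⧸ Kn n := qmap n (wσ n i)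
def qρ (n i : ℕ) : WB n ⧸ Kn n := qmap n (wρ n i)

/-- any two elements of the commutator subgroup of the quotient commute -/
lemma ncomm {n : ℕ} {x y : WB n ⧸ Kn n}
    (hx : x ∈ commutator (WB n ⧸ Kn n)) (hy : y ∈ commutator (WB n ⧸ Kn n)) :
    Commute x y := by
  have hle : commutator (WB n ⧸ Kn n) ≤ Subgroup.map (qmap n) (commutator (WB n)) := by
    have h1 : (⁅(⊤ : Subgroup (WB n ⧸ Kn n)), (⊤ : Subgroup (WB n ⧸ Kn n))⁆ : Subgroup _) ≤
        Subgroup.map (qmap n) ⁅(⊤ : Subgroup (WB n)), (⊤ : Subgroup (WB n))⁆ := by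
      refine Subgroup.commutator_le_map_commutator ?_ ?_ <;>
        exact le_of_eq (Subgroup.map_top_of_surjective _ (qmap_surjective n)).symm
    exact h1
  obtain ⟨a, ha, rfl⟩ := hle hx
  obtain ⟨b, hb, rfl⟩ := hle hy
  have hk : ⁅a, b⁆ ∈ Kn n := Subgroup.commutator_mem_commutator ha hb
  have h1 : qmap n ⁅a, b⁆ = 1 := (QuotientGroup.eq_one_iff _).mpr hk
  rw [map_commutatorElement] at h1
  exact commutatorElement_eq_one_iff_commute.mp h1

lemma mem_comm_q {n : ℕ} (g h : WB n ⧸ Kn n) : ⁅g, h⁆ ∈ commutator (WB n ⧸ Kn n) :=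
  Subgroup.commutator_mem_commutator (Subgroup.mem_top g) (Subgroup.mem_top h)

/-! relations in the quotient -/

lemma qrel_ss {n i j : ℕ} (h1 : 1 ≤ i) (h2 : i + 2 ≤ j) (h3 : j ≤ n - 1) :
    qσ n i * qσ n j = qσ n j * qσ n i := by
  have := congrArg (qmap n) (rel_ss h1 h2 h3)
  simpa only [map_mul, qσ] using this

lemma qrel_sr {n i j : ℕ} (h1 : 1 ≤ i) (h2 : i + 2 ≤ j) (h3 : j ≤ n - 1) :
    qσ n i * qρ n j = qρ n j * qσ n i := by
  have := congrArg (qmap n) (rel_sr h1 h2 h3)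
  simpa only [map_mul, qσ, qρ] using this

lemma qrel_rs {n i j : ℕ} (h1 : 1 ≤ i) (h2 : i + 2 ≤ j) (h3 : j ≤ n - 1) :
    qσ n j * qρ n i = qρ n i * qσ n j := by
  have := congrArg (qmap n) (rel_rs h1 h2 h3)
  simpa only [map_mul, qσ, qρ] using this

lemma qrel_braid {n i : ℕ} (h1 : 1 ≤ i) (h2 : i + 1 ≤ n - 1) :
    qσ n i * qσ n (i+1) * qσ n i = qσ n (i+1) * qσ n i * qσ n (i+1) := by
  have := congrArg (qmap n) (rel_braid h1 h2)
  simpa only [map_mul, qσ] using this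

lemma qrel_welded {n i : ℕ} (h1 : 1 ≤ i) (h2 : i + 1 ≤ n - 1) :
    qρ n i * qσ n (i+1) * qσ n i = qσ n (i+1) * qσ n i * qρ n (i+1) := by
  have := congrArg (qmap n) (rel_welded h1 h2)
  simpa only [map_mul, qσ, qρ] using this

/-- σ_m σ_1⁻¹ lies in the commutator subgroup of the quotient -/
lemma c_mem {n : ℕ} : ∀ m, 1 ≤ m → m ≤ n - 1 →
    qσ n m * (qσ n 1)⁻¹ ∈ commutator (WB n ⧸ Kn n)
  | 0, h, _ => absurd h (by omega)
  | 1, _, _ => by simpa using one_mem _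
  | (m+2), _, h3 => by
    have ih := c_mem (n := n) (m+1) (by omega) (by omega)
    have braid := qrel_braid (n := n) (i := m+1) (by omega) (by omega)
    have step : qσ n (m+2) * (qσ n (m+1))⁻¹ = ⁅qσ n (m+1) * qσ n (m+2), qσ n (m+1)⁆ := by
      rw [commutatorElement_def]
      have e1 : qσ n (m+1) * qσ n (m+2) * qσ n (m+1) * (qσ n (m+1) * qσ n (m+2))⁻¹ *
          (qσ n (m+1))⁻¹ =
          (qσ n (m+1) * qσ n (m+1+1) * qσ n (m+1)) *
            ((qσ n (m+2))⁻¹ * (qσ n (m+1))⁻¹ * (qσ n (m+1))⁻¹) := by group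
      rw [e1, braid]; group
    have split : qσ n (m+2) * (qσ n 1)⁻¹ =
        (qσ n (m+2) * (qσ n (m+1))⁻¹) * (qσ n (m+1) * (qσ n 1)⁻¹) := by group
    rw [split, step]
    exact mul_mem (mem_comm_q _ _) ih

/-- conjugation by σ_1 fixes σ_m σ_1⁻¹ in the quotient (n ≥ 5) -/
lemma conj_c {n : ℕ} (hn : 5 ≤ n) (m : ℕ) (h1 : 1 ≤ m) (h3 : m ≤ n - 1) :
    qσ n 1 * (qσ n m * (qσ n 1)⁻¹) * (qσ n 1)⁻¹ = qσ n m * (qσ n 1)⁻¹ := by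
  rcases Nat.lt_or_ge m 3 with hm | hm
  · interval_cases m
    · group
    · -- m = 2 : the crucial case using n ≥ 5
      have h24 : qσ n 2 * qσ n 4 = qσ n 4 * qσ n 2 := qrel_ss (by omega) (by omega) (by omega)
      have h14 : qσ n 1 * qσ n 4 = qσ n 4 * qσ n 1 := qrel_ss (by omega) (by omega) (by omega)
      have c24 : Commute (qσ n 2) (qσ n 4) := h24
      have c14 : Commute (qσ n 1) (qσ n 4) := h14
      have c4c2 : Commute (qσ n 4) (qσ n 2 * (qσ n 1)⁻¹) :=
        c24.symm.mul_right c14.symm.inv_right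
      have hA : qσ n 4 * (qσ n 2 * (qσ n 1)⁻¹) * (qσ n 4)⁻¹ = qσ n 2 * (qσ n 1)⁻¹ := by
        rw [c4c2.eq]; group
      have hmemc4 : qσ n 4 * (qσ n 1)⁻¹ ∈ commutator (WB n ⧸ Kn n) :=
        c_mem 4 (by omega) (by omega)
      have hmemconj : qσ n 1 * (qσ n 2 * (qσ n 1)⁻¹) * (qσ n 1)⁻¹ ∈
          commutator (WB n ⧸ Kn n) :=
        (Subgroup.Normal.conj_mem inferInstance _ (c_mem 2 (by omega) (by omega)) _)
      have hcomm : Commute (qσ n 4 * (qσ n 1)⁻¹)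
          (qσ n 1 * (qσ n 2 * (qσ n 1)⁻¹) * (qσ n 1)⁻¹) := ncomm hmemc4 hmemconj
      have key : qσ n 2 * (qσ n 1)⁻¹ =
          qσ n 1 * (qσ n 2 * (qσ n 1)⁻¹) * (qσ n 1)⁻¹ := by
        calc qσ n 2 * (qσ n 1)⁻¹ = qσ n 4 * (qσ n 2 * (qσ n 1)⁻¹) * (qσ n 4)⁻¹ := hA.symm
          _ = (qσ n 4 * (qσ n 1)⁻¹) * (qσ n 1 * (qσ n 2 * (qσ n 1)⁻¹) * (qσ n 1)⁻¹) *
                (qσ n 4 * (qσ n 1)⁻¹)⁻¹ := by group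
          _ = qσ n 1 * (qσ n 2 * (qσ n 1)⁻¹) * (qσ n 1)⁻¹ := by rw [hcomm.eq]; group
      exact key.symm
  · -- m ≥ 3 : σ_1 and σ_m commute
    have h1m : qσ n 1 * qσ n m = qσ n m * qσ n 1 := qrel_ss (by omega) (by omega) h3
    have e : qσ n 1 * (qσ n m * (qσ n 1)⁻¹) * (qσ n 1)⁻¹ =
        (qσ n 1 * qσ n m) * ((qσ n 1)⁻¹ * (qσ n 1)⁻¹) := by group
    rw [e, h1m]; group

/-- all σ's commute in the quotient -/
lemma qs_comm {n : ℕ} (hn : 5 ≤ n) (l m : ℕ) (hl1 : 1 ≤ l) (hl3 : l ≤ n - 1)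
    (hm1 : 1 ≤ m) (hm3 : m ≤ n - 1) : qσ n l * qσ n m = qσ n m * qσ n l := by
  have hl := conj_c hn l hl1 hl3
  have hm := conj_c hn m hm1 hm3
  have hcl := c_mem (n := n) l hl1 hl3
  have hcm := c_mem (n := n) m hm1 hm3
  have hcc : Commute (qσ n l * (qσ n 1)⁻¹) (qσ n m * (qσ n 1)⁻¹) := ncomm hcl hcm
  calc qσ n l * qσ n m
      = (qσ n l * (qσ n 1)⁻¹) * (qσ n 1 * (qσ n m * (qσ n 1)⁻¹) * (qσ n 1)⁻¹) *
        (qσ n 1 * qσ n 1) := by group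
    _ = (qσ n l * (qσ n 1)⁻¹) * (qσ n m * (qσ n 1)⁻¹) * (qσ n 1 * qσ n 1) := by rw [hm]
    _ = (qσ n m * (qσ n 1)⁻¹) * (qσ n l * (qσ n 1)⁻¹) * (qσ n 1 * qσ n 1) := by rw [hcc.eq]
    _ = (qσ n m * (qσ n 1)⁻¹) * (qσ n 1 * (qσ n l * (qσ n 1)⁻¹) * (qσ n 1)⁻¹) *
        (qσ n 1 * qσ n 1) := by rw [hl]
    _ = qσ n m * qσ n l := by group

/-- all σ's are equal in the quotient -/
lemma qs_eq {n : ℕ} (hn : 5 ≤ n) : ∀ m, 1 ≤ m → m ≤ n - 1 → qσ n m = qσ n 1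
  | 0, h, _ => absurd h (by omega)
  | 1, _, _ => rfl
  | (m+2), _, h3 => by
    have ih := qs_eq (n := n) hn (m+1) (by omega) (by omega)
    have braid := qrel_braid (n := n) (i := m+1) (by omega) (by omega)
    have hcomm := qs_comm hn (m+1) (m+2) (by omega) (by omega) (by omega) h3
    rw [hcomm] at braid
    -- braid : qσ (m+2) * qσ (m+1) * qσ (m+1) = qσ (m+2) * qσ (m+1) * qσ (m+2)
    have : qσ n (m+1) = qσ n (m+2) := mul_left_cancel braid
    rw [← this, ih]

/-- σ_1 commutes with ρ_j for 2 ≤ j ≤ n-1 in the quotient -/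
lemma qsr_comm {n : ℕ} (hn : 5 ≤ n) (j : ℕ) (hj2 : 2 ≤ j) (hj3 : j ≤ n - 1) :
    qσ n 1 * qρ n j = qρ n j * qσ n 1 := by
  rcases Nat.lt_or_ge j 3 with hj | hj
  · -- j = 2 : use σ_4 ρ_2 = ρ_2 σ_4 and σ_4 = σ_1
    have hj2' : j = 2 := by omega
    subst hj2'
    have h := qrel_rs (n := n) (i := 2) (j := 4) (by omega) (by omega) (by omega)
    rwa [qs_eq hn 4 (by omega) (by omega)] at h
  · exact qrel_sr (by omega) (by omega) hj3

/-- all ρ's are equal in the quotient -/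
lemma qr_eq {n : ℕ} (hn : 5 ≤ n) : ∀ j, 1 ≤ j → j ≤ n - 1 → qρ n j = qρ n 1
  | 0, h, _ => absurd h (by omega)
  | 1, _, _ => rfl
  | 2, _, h3 => by
    have hw := qrel_welded (n := n) (i := 1) (by omega) (by omega)
    rw [qs_eq hn (1+1) (by omega) (by omega)] at hw
    have hw' : qρ n 1 * qσ n 1 * qσ n 1 = qσ n 1 * qσ n 1 * qρ n 2 := hw
    have c2 : Commute (qσ n 1) (qρ n 2) := qsr_comm hn 2 (by omega) h3
    have key : qρ n 1 * qσ n 1 * qσ n 1 = qρ n 2 * qσ n 1 * qσ n 1 :=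
      hw'.trans ((c2.mul_left c2).eq.trans (mul_assoc _ _ _).symm)
    exact (mul_right_cancel (mul_right_cancel key)).symm
  | (m+3), _, h3 => by
    have ih := qr_eq (n := n) hn (m+2) (by omega) (by omega)
    have hw := qrel_welded (n := n) (i := m+2) (by omega) (by omega)
    rw [qs_eq hn (m+2+1) (by omega) (by omega), qs_eq hn (m+2) (by omega) (by omega)] at hw
    have hw' : qρ n (m+2) * qσ n 1 * qσ n 1 = qσ n 1 * qσ n 1 * qρ n (m+3) := hw
    have c2 : Commute (qσ n 1) (qρ n (m+2)) := qsr_comm hn (m+2) (by omega) (by omega)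
    have key : qσ n 1 * qσ n 1 * qρ n (m+2) = qσ n 1 * qσ n 1 * qρ n (m+3) :=
      ((c2.mul_left c2).eq.trans ((mul_assoc _ _ _).symm.trans hw'))
    have hkey : qσ n 1 * (qσ n 1 * qρ n (m+2)) = qσ n 1 * (qσ n 1 * qρ n (m+3)) := by
      rw [← mul_assoc, ← mul_assoc]; exact key
    have h23 : qρ n (m+2) = qρ n (m+3) := mul_left_cancel (mul_left_cancel hkey)
    rw [← h23]; exact ih

/-- σ_1 and ρ_1 commute in the quotient -/
lemma qsr1_comm {n : ℕ} (hn : 5 ≤ n) : qσ n 1 * qρ n 1 = qρ n 1 * qσ n 1 := by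
  have h3 := qsr_comm hn 3 (by omega) (by omega)
  rwa [qr_eq hn 3 (by omega) (by omega)] at h3

/-- every generator of the quotient equals `qσ 1` or `qρ 1` -/
lemma gen_eq {n : ℕ} (hn : 5 ≤ n) (x : VBGen n) :
    qmap n (PresentedGroup.of x) = qσ n 1 ∨ qmap n (PresentedGroup.of x) = qρ n 1 := by
  cases x with
  | inl k =>
    left
    have hk := k.isLt
    have hfσ : fσ n ((k : ℕ) + 1) = FreeGroup.of (Sum.inl k) := by
      rw [fσ, dif_pos (⟨by omega, by omega⟩ : 1 ≤ (k : ℕ) + 1 ∧ (k : ℕ) + 1 - 1 < n - 1)]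
      exact congrArg _ (congrArg _ (Fin.ext (by simp)))
    have hw : wσ n ((k : ℕ) + 1) = PresentedGroup.of (Sum.inl k) := by
      rw [wσ, hfσ]; rfl
    rw [← qs_eq hn ((k : ℕ) + 1) (by omega) (by omega), qσ, hw]
  | inr k =>
    right
    have hk := k.isLt
    have hfρ : fρ n ((k : ℕ) + 1) = FreeGroup.of (Sum.inr k) := by
      rw [fρ, dif_pos (⟨by omega, by omega⟩ : 1 ≤ (k : ℕ) + 1 ∧ (k : ℕ) + 1 - 1 < n - 1)]
      exact congrArg _ (congrArg _ (Fin.ext (by simp)))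
    have hw : wρ n ((k : ℕ) + 1) = PresentedGroup.of (Sum.inr k) := by
      rw [wρ, hfρ]; rfl
    rw [← qr_eq hn ((k : ℕ) + 1) (by omega) (by omega), qρ, hw]

/-- generators pairwise commute in the quotient -/
lemma gen_comm {n : ℕ} (hn : 5 ≤ n) (x y : VBGen n) :
    Commute (qmap n (PresentedGroup.of x)) (qmap n (PresentedGroup.of y)) := by
  have hc : Commute (qσ n 1) (qρ n 1) := qsr1_comm hn
  rcases gen_eq hn x with hx | hx <;> rcases gen_eq hn y with hy | hy <;> rw [hx, hy] <;>
    first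
      | exact Commute.refl _
      | exact hc
      | exact hc.symm

/-- each generator commutes with everything in the quotient -/
lemma gen_comm_all {n : ℕ} (hn : 5 ≤ n) (x : VBGen n) (g : WB n) :
    Commute (qmap n (PresentedGroup.of x)) (qmap n g) := by
  have hmem : g ∈ Subgroup.comap (qmap n)
      (Subgroup.centralizer {qmap n (PresentedGroup.of x)}) := by
    refine PresentedGroup.generated_by _ _ (fun j => ?_) g
    rw [Subgroup.mem_comap, Subgroup.mem_centralizer_iff]
    intro h hh
    rw [Set.mem_singleton_iff] at hh
    subst hh
    exact gen_comm hn x j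
  rw [Subgroup.mem_comap, Subgroup.mem_centralizer_iff] at hmem
  exact hmem _ (Set.mem_singleton _)

/-- the quotient is abelian -/
lemma q_abelian {n : ℕ} (hn : 5 ≤ n) (x y : WB n ⧸ Kn n) : Commute x y := by
  obtain ⟨g, rfl⟩ := qmap_surjective n x
  obtain ⟨h, rfl⟩ := qmap_surjective n y
  have hmem : g ∈ Subgroup.comap (qmap n) (Subgroup.centralizer {qmap n h}) := by
    refine PresentedGroup.generated_by _ _ (fun j => ?_) g
    rw [Subgroup.mem_comap, Subgroup.mem_centralizer_iff]
    intro z hz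
    rw [Set.mem_singleton_iff] at hz
    subst hz
    exact (gen_comm_all hn j h).symm
  rw [Subgroup.mem_comap, Subgroup.mem_centralizer_iff] at hmem
  exact (hmem _ (Set.mem_singleton _)).symm

end WBPerfect

open scoped commutatorElement

/-- For `n ≥ 5`, the commutator subgroup `WB_n'` is perfect,
i.e. `WB_n'' = WB_n'`. -/
theorem WB_commutator_perfect (n : ℕ) (hn : 5 ≤ n) :
    commutator ↥(commutator (WB n)) = ⊤ := by
  have hKH : WBPerfect.Kn n = commutator (WB n) := by
    apply le_antisymm
    · rw [commutator_def]
      exact Subgroup.commutator_mono le_top le_top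
    · rw [commutator_def]
      rw [Subgroup.commutator_le]
      intro g _ h _
      have h1 : WBPerfect.qmap n ⁅g, h⁆ = 1 := by
        rw [map_commutatorElement]
        exact commutatorElement_eq_one_iff_commute.mpr (WBPerfect.q_abelian hn _ _)
      exact (QuotientGroup.eq_one_iff _).mp h1
  apply Subgroup.map_injective (Subgroup.subtype_injective (commutator (WB n)))
  have htop : Subgroup.map (commutator (WB n)).subtype ⊤ = commutator (WB n) := by
    rw [← MonoidHom.range_eq_map, Subgroup.range_subtype]
  calc Subgroup.map (commutator (WB n)).subtype (commutator ↥(commutator (WB n)))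
      = ⁅Subgroup.map (commutator (WB n)).subtype ⊤,
          Subgroup.map (commutator (WB n)).subtype ⊤⁆ :=
        Subgroup.map_commutator ⊤ ⊤ _
    _ = ⁅commutator (WB n), commutator (WB n)⁆ := by rw [htop]
    _ = commutator (WB n) := hKH
    _ = Subgroup.map (commutator (WB n)).subtype ⊤ := htop.symm
end

section
/- The commutator subgroup WB_3' of WB_3 is isomorphic to the presented group with generators A_m, F_m (m ∈ ℤ) and defining relators F_{m+1}^{−1} F_{m+2} F_{m+3}^{−1} F_{m+2} F_{m+1}^{−1} F_m, A_m F_{m+1} A_{m+1} F_{m+2}^{−1} A_{m+2} F_{m+3} A_{m+2}^{−1} F_{m+2}^{−1} A_{m+1}^{−1} F_{m+1} A_m^{−1} F_m^{−1}, F_m³, and A_m F_{m+1}^{−1} A_{m+1} F_{m+2}^{−1} F_{m+1}^{−1} F_m^{−1} (for all m ∈ ℤ), via an isomorphism sending A_m to a_m and F_m to f_m (images in WB_3). -/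
/-- Relators of the presentation of `WB_3'`: generators `A_m = Sum.inl m`,
`F_m = Sum.inr m` for `m : ℤ`. -/
def wb3Rels : Set (FreeGroup (ℤ ⊕ ℤ)) :=
  {r | ∃ m : ℤ,
    r = (FreeGroup.of (Sum.inr (m+1) : ℤ ⊕ ℤ))⁻¹ * FreeGroup.of (Sum.inr (m+2)) *
        (FreeGroup.of (Sum.inr (m+3) : ℤ ⊕ ℤ))⁻¹ * FreeGroup.of (Sum.inr (m+2)) *
        (FreeGroup.of (Sum.inr (m+1) : ℤ ⊕ ℤ))⁻¹ * FreeGroup.of (Sum.inr m) ∨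
    r = FreeGroup.of (Sum.inl m : ℤ ⊕ ℤ) * FreeGroup.of (Sum.inr (m+1)) *
        FreeGroup.of (Sum.inl (m+1)) * (FreeGroup.of (Sum.inr (m+2) : ℤ ⊕ ℤ))⁻¹ *
        FreeGroup.of (Sum.inl (m+2)) * FreeGroup.of (Sum.inr (m+3)) *
        (FreeGroup.of (Sum.inl (m+2) : ℤ ⊕ ℤ))⁻¹ * (FreeGroup.of (Sum.inr (m+2) : ℤ ⊕ ℤ))⁻¹ *
        (FreeGroup.of (Sum.inl (m+1) : ℤ ⊕ ℤ))⁻¹ * FreeGroup.of (Sum.inr (m+1)) *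
        (FreeGroup.of (Sum.inl m : ℤ ⊕ ℤ))⁻¹ * (FreeGroup.of (Sum.inr m : ℤ ⊕ ℤ))⁻¹ ∨
    r = (FreeGroup.of (Sum.inr m : ℤ ⊕ ℤ)) ^ 3 ∨
    r = FreeGroup.of (Sum.inl m : ℤ ⊕ ℤ) * (FreeGroup.of (Sum.inr (m+1) : ℤ ⊕ ℤ))⁻¹ *
        FreeGroup.of (Sum.inl (m+1)) * (FreeGroup.of (Sum.inr (m+2) : ℤ ⊕ ℤ))⁻¹ *
        (FreeGroup.of (Sum.inr (m+1) : ℤ ⊕ ℤ))⁻¹ * (FreeGroup.of (Sum.inr m : ℤ ⊕ ℤ))⁻¹}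

namespace WBP

local notation "s" => wσ 3 1
local notation "u" => wσ 3 2
local notation "p" => wρ 3 1
local notation "q" => wρ 3 2

lemma relW {r : FreeGroup (VBGen 3)} (h : r ∈ wbRels 3) :
    PresentedGroup.mk (wbRels 3) r = 1 :=
  (QuotientGroup.eq_one_iff r).2 (Subgroup.subset_normalClosure h)

lemma braid : s * u * s = u * s * u := by
  have h := relW (r := fσ 3 1 * fσ 3 2 * fσ 3 1 * (fσ 3 2)⁻¹ * (fσ 3 1)⁻¹ * (fσ 3 2)⁻¹)
    (Or.inl (Or.inl (Or.inr ⟨1, by norm_num, by norm_num, Or.inl rfl⟩)))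
  simp only [map_mul, map_inv] at h
  rw [← mul_inv_eq_one]
  rw [show wσ 3 1 * wσ 3 2 * wσ 3 1 * (wσ 3 2 * wσ 3 1 * wσ 3 2)⁻¹ =
    wσ 3 1 * wσ 3 2 * wσ 3 1 * (wσ 3 2)⁻¹ * (wσ 3 1)⁻¹ * (wσ 3 2)⁻¹ by group]
  exact h

lemma pbraid : p * q * p = q * p * q := by
  have h := relW (r := fρ 3 1 * fρ 3 2 * fρ 3 1 * (fρ 3 2)⁻¹ * (fρ 3 1)⁻¹ * (fρ 3 2)⁻¹)
    (Or.inl (Or.inl (Or.inr ⟨1, by norm_num, by norm_num, Or.inr (Or.inl rfl)⟩)))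
  simp only [map_mul, map_inv] at h
  rw [← mul_inv_eq_one]
  rw [show wρ 3 1 * wρ 3 2 * wρ 3 1 * (wρ 3 2 * wρ 3 1 * wρ 3 2)⁻¹ =
    wρ 3 1 * wρ 3 2 * wρ 3 1 * (wρ 3 2)⁻¹ * (wρ 3 1)⁻¹ * (wρ 3 2)⁻¹ by group]
  exact h

lemma mixed : p * q * s = u * (p * q) := by
  have h := relW (r := fρ 3 1 * fρ 3 2 * fσ 3 1 * (fρ 3 2)⁻¹ * (fρ 3 1)⁻¹ * (fσ 3 2)⁻¹)
    (Or.inl (Or.inl (Or.inr ⟨1, by norm_num, by norm_num, Or.inr (Or.inr rfl)⟩)))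
  simp only [map_mul, map_inv] at h
  rw [← mul_inv_eq_one]
  rw [show wρ 3 1 * wρ 3 2 * wσ 3 1 * (wσ 3 2 * (wρ 3 1 * wρ 3 2))⁻¹ =
    wρ 3 1 * wρ 3 2 * wσ 3 1 * (wρ 3 2)⁻¹ * (wρ 3 1)⁻¹ * (wσ 3 2)⁻¹ by group]
  exact h

lemma hp : p * p = 1 := by
  have h := relW (r := fρ 3 1 * fρ 3 1) (Or.inl (Or.inr ⟨1, by norm_num, by norm_num, rfl⟩))
  simp only [map_mul] at h; exact h

lemma hq : q * q = 1 := by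
  have h := relW (r := fρ 3 2 * fρ 3 2) (Or.inl (Or.inr ⟨2, by norm_num, by norm_num, rfl⟩))
  simp only [map_mul] at h; exact h

lemma weld : p * u * s = u * s * q := by
  have h := relW (r := fρ 3 1 * fσ 3 2 * fσ 3 1 * (fρ 3 2)⁻¹ * (fσ 3 1)⁻¹ * (fσ 3 2)⁻¹)
    (Or.inr ⟨1, by norm_num, by norm_num, rfl⟩)
  simp only [map_mul, map_inv] at h
  rw [← mul_inv_eq_one]
  rw [show wρ 3 1 * wσ 3 2 * wσ 3 1 * (wσ 3 2 * wσ 3 1 * wρ 3 2)⁻¹ =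
    wρ 3 1 * wσ 3 2 * wσ 3 1 * (wρ 3 2)⁻¹ * (wσ 3 1)⁻¹ * (wσ 3 2)⁻¹ by group]
  exact h
-- chunk 2 : core algebra in WB 3
lemma p_inv : (p)⁻¹ = p := inv_eq_of_mul_eq_one_right hp
lemma q_inv : (q)⁻¹ = q := inv_eq_of_mul_eq_one_right hq

lemma pp' (w : WB 3) : p * (p * w) = w := by rw [← mul_assoc, hp, one_mul]
lemma qq' (w : WB 3) : q * (q * w) = w := by rw [← mul_assoc, hq, one_mul]

lemma pbraid' (w : WB 3) : p * (q * (p * w)) = q * (p * (q * w)) := by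
  have h : p * q * p * w = q * p * q * w := by rw [pbraid]
  simpa [mul_assoc] using h

-- t = q * p ; we use the plain expression
lemma t3 : (q*p) * (q*p) * (q*p) = 1 := by
  simp only [mul_assoc]
  rw [pbraid' (q*p), qq', qq', hp]

lemma t2 : (q*p) * (q*p) = (q*p)⁻¹ := eq_inv_of_mul_eq_one_left t3

lemma tinv : (q*p)⁻¹ = p * q := by rw [mul_inv_rev, p_inv, q_inv]

lemma u_eq2 : u = p*q*s*(q*p) := by
  have h2 : u = p*q*s*(p*q)⁻¹ := by rw [mixed]; group
  rw [h2, mul_inv_rev, p_inv, q_inv]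

lemma u_eq : u = (q*p)⁻¹*s*(q*p) := by rw [tinv]; simpa [mul_assoc] using u_eq2

lemma st : s*(q*p) = (q*p)*u := by rw [u_eq]; group
lemma ut : u*(q*p)⁻¹ = (q*p)⁻¹*s := by rw [u_eq]; group

lemma ptp : p*(q*p)*p = (q*p)⁻¹ := by rw [tinv]; simp only [mul_assoc, hp, mul_one]
lemma ptp_inv : p*(q*p)⁻¹*p = (q*p) := by rw [tinv]; simp only [mul_assoc, pp']

lemma pup : p*u*p = q*s*q := by
  rw [u_eq2]; simp only [mul_assoc, pp', hp, mul_one]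

-- key computation for R4
lemma keyN : p*s*(q*p)*s*p = (q*p)*s*(q*p)*s*(q*p) := by
  have lhs : p*s*(q*p)*s*p = (q*p)⁻¹*(u*((q*p)*u)) := by
    calc p*s*(q*p)*s*p = p*(s*(q*p))*s*p := by group
    _ = p*((q*p)*u)*s*p := by rw [st]
    _ = (p*(q*p)*p)*(p*u*s*p) := by simp only [mul_assoc, pp']
    _ = (q*p)⁻¹*(p*u*s*p) := by rw [ptp]
    _ = (q*p)⁻¹*(u*s*q*p) := by rw [weld]
    _ = (q*p)⁻¹*(u*(s*(q*p))) := by group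
    _ = (q*p)⁻¹*(u*((q*p)*u)) := by rw [st]
  have rhs : (q*p)*s*(q*p)*s*(q*p) = (q*p)⁻¹*(u*((q*p)*u)) := by
    calc (q*p)*s*(q*p)*s*(q*p) = (q*p)*(s*(q*p))*(s*(q*p)) := by group
    _ = (q*p)*((q*p)*u)*((q*p)*u) := by rw [st]
    _ = ((q*p)*(q*p))*(u*((q*p)*u)) := by group
    _ = (q*p)⁻¹*(u*((q*p)*u)) := by rw [t2]
  rw [lhs, rhs]

-- R1 core
lemma su_key : s*u*s*(q*p)⁻¹ = u*s*(q*p)⁻¹*s := by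
  calc s*u*s*(q*p)⁻¹ = (s*u*s)*(q*p)⁻¹ := by group
  _ = u*s*(u*(q*p)⁻¹) := by rw [braid]; group
  _ = u*s*((q*p)⁻¹*s) := by rw [ut]
  _ = u*s*(q*p)⁻¹*s := by group

lemma su_key' : s*((q*p)⁻¹*s*(q*p))*s*(q*p)⁻¹ = ((q*p)⁻¹*s*(q*p))*s*(q*p)⁻¹*s := by
  rw [← u_eq]; exact su_key

lemma key1 : s*((q*p)⁻¹*s*(q*p)*s*(q*p)⁻¹*s⁻¹*s⁻¹) = ((q*p)⁻¹*s*(q*p)*s*(q*p)⁻¹*s⁻¹*s⁻¹)*s := by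
  calc s*((q*p)⁻¹*s*(q*p)*s*(q*p)⁻¹*s⁻¹*s⁻¹) = (s*((q*p)⁻¹*s*(q*p))*s*(q*p)⁻¹)*s⁻¹*s⁻¹ := by group
  _ = (((q*p)⁻¹*s*(q*p))*s*(q*p)⁻¹*s)*s⁻¹*s⁻¹ := by rw [su_key']
  _ = ((q*p)⁻¹*s*(q*p)*s*(q*p)⁻¹*s⁻¹*s⁻¹)*s := by group

-- chunk 3: concrete values and AF-relations in WB 3
lemma wf_eq (m : ℤ) : wf 3 m 0 = s^m * (q*p) * s^(-m) := by
  simp [wf]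

lemma sz2 : (wσ 3 1)^(2:ℤ) = s*s := by
  rw [(by norm_num : (2:ℤ) = 1+1), zpow_add, zpow_one]
lemma sz3 : (wσ 3 1)^(3:ℤ) = s*s*s := by
  rw [(by norm_num : (3:ℤ) = 1+1+1), zpow_add, zpow_add, zpow_one]

lemma wa0 : wa 3 0 = p*s*p*s⁻¹ := by rw [wa]; group
lemma wa1 : wa 3 1 = s*(p*s*p*s⁻¹)*s⁻¹ := by rw [wa]; group
lemma wa2 : wa 3 2 = s*s*(p*s*p*s⁻¹)*s⁻¹*s⁻¹ := by
  rw [wa, sz2, (by norm_num : (-2:ℤ) = -1+-1), zpow_add]; group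
lemma wf0 : wf 3 0 0 = q*p := by rw [wf_eq]; group
lemma wf1 : wf 3 1 0 = s*(q*p)*s⁻¹ := by rw [wf_eq]; group
lemma wf2 : wf 3 2 0 = s*s*(q*p)*s⁻¹*s⁻¹ := by
  rw [wf_eq, sz2, (by norm_num : (-2:ℤ) = -1+-1), zpow_add]; group
lemma wf3 : wf 3 3 0 = s*s*s*(q*p)*s⁻¹*s⁻¹*s⁻¹ := by
  rw [wf_eq, sz3, (by norm_num : (-3:ℤ) = -1+-1+-1), zpow_add, zpow_add]; group

lemma a_shift (j m : ℤ) : wa 3 (j+m) = s^j * wa 3 m * s^(-j) := by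
  simp only [wa]; group

lemma f_shift (j m : ℤ) : wf 3 (j+m) 0 = s^j * wf 3 m 0 * s^(-j) := by
  simp only [wf]; group

-- R3
lemma R3f (m : ℤ) : (wf 3 m 0)^3 = 1 := by
  rw [wf_eq, zpow_neg, conj_pow, pow_three', t3, mul_one, mul_inv_cancel]

-- R1
lemma R1conc : (wf 3 1 0)⁻¹ * wf 3 2 0 * (wf 3 3 0)⁻¹ * wf 3 2 0 * (wf 3 1 0)⁻¹ * wf 3 0 0 = 1 := by
  rw [wf0, wf1, wf2, wf3]
  have e : (s*(q*p)*s⁻¹)⁻¹ * (s*s*(q*p)*s⁻¹*s⁻¹) * (s*s*s*(q*p)*s⁻¹*s⁻¹*s⁻¹)⁻¹ *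
      (s*s*(q*p)*s⁻¹*s⁻¹) * (s*(q*p)*s⁻¹)⁻¹ * (q*p) =
      s*((q*p)⁻¹*s*(q*p)*s*(q*p)⁻¹*s⁻¹*s⁻¹)*s⁻¹*((q*p)⁻¹*s*(q*p)*s*(q*p)⁻¹*s⁻¹*s⁻¹)⁻¹ := by
    group
  rw [e, key1]; group

lemma R1f (m : ℤ) : (wf 3 (m+1) 0)⁻¹ * wf 3 (m+2) 0 * (wf 3 (m+3) 0)⁻¹ * wf 3 (m+2) 0 *
    (wf 3 (m+1) 0)⁻¹ * wf 3 m 0 = 1 := by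
  have h1 := f_shift m 1; have h2 := f_shift m 2; have h3 := f_shift m 3
  have h0 : wf 3 m 0 = s^m * wf 3 0 0 * s^(-m) := by
    have := f_shift m 0; rwa [add_zero] at this
  rw [h1, h2, h3, h0]
  calc (s^m * wf 3 1 0 * s^(-m))⁻¹ * (s^m * wf 3 2 0 * s^(-m)) * (s^m * wf 3 3 0 * s^(-m))⁻¹ * (s^m * wf 3 2 0 * s^(-m)) * (s^m * wf 3 1 0 * s^(-m))⁻¹ * (s^m * wf 3 0 0 * s^(-m)) = s^m * ((wf 3 1 0)⁻¹ * wf 3 2 0 * (wf 3 3 0)⁻¹ * wf 3 2 0 * (wf 3 1 0)⁻¹ * wf 3 0 0) * s^(-m) := by group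
    _ = 1 := by rw [R1conc]; group

-- R4
lemma R4main : (p*s*p*s⁻¹) * (s*(q*p)*s⁻¹)⁻¹ * (s*(p*s*p*s⁻¹)*s⁻¹) =
    (q*p)*(s*(q*p)*s⁻¹)*(s*s*(q*p)*s⁻¹*s⁻¹) := by
  calc (p*s*p*s⁻¹) * (s*(q*p)*s⁻¹)⁻¹ * (s*(p*s*p*s⁻¹)*s⁻¹) = p*s*(p*(q*p)⁻¹*p)*s*p*s⁻¹*s⁻¹ := by group
    _ = p*s*(q*p)*s*p*s⁻¹*s⁻¹ := by rw [ptp_inv]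
    _ = (q*p)*s*(q*p)*s*(q*p)*s⁻¹*s⁻¹ := by rw [keyN]
    _ = (q*p)*(s*(q*p)*s⁻¹)*(s*s*(q*p)*s⁻¹*s⁻¹) := by group

lemma R4conc : wa 3 0 * (wf 3 1 0)⁻¹ * wa 3 1 * (wf 3 2 0)⁻¹ * (wf 3 1 0)⁻¹ * (wf 3 0 0)⁻¹ = 1 := by
  rw [wa0, wa1, wf0, wf1, wf2]
  have e : (p*s*p*s⁻¹) * (s*(q*p)*s⁻¹)⁻¹ * (s*(p*s*p*s⁻¹)*s⁻¹) * (s*s*(q*p)*s⁻¹*s⁻¹)⁻¹ *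
      (s*(q*p)*s⁻¹)⁻¹ * (q*p)⁻¹ =
      ((p*s*p*s⁻¹) * (s*(q*p)*s⁻¹)⁻¹ * (s*(p*s*p*s⁻¹)*s⁻¹)) *
      ((q*p)*(s*(q*p)*s⁻¹)*(s*s*(q*p)*s⁻¹*s⁻¹))⁻¹ := by group
  rw [e, R4main]; group

lemma R4f (m : ℤ) : wa 3 m * (wf 3 (m+1) 0)⁻¹ * wa 3 (m+1) * (wf 3 (m+2) 0)⁻¹ *
    (wf 3 (m+1) 0)⁻¹ * (wf 3 m 0)⁻¹ = 1 := by
  have h1 := f_shift m 1; have h2 := f_shift m 2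
  have h0 : wf 3 m 0 = s^m * wf 3 0 0 * s^(-m) := by
    have := f_shift m 0; rwa [add_zero] at this
  have g1 := a_shift m 1
  have g0 : wa 3 m = s^m * wa 3 0 * s^(-m) := by
    have := a_shift m 0; rwa [add_zero] at this
  rw [h1, h2, h0, g1, g0]
  calc (s^m * wa 3 0 * s^(-m)) * (s^m * wf 3 1 0 * s^(-m))⁻¹ * (s^m * wa 3 1 * s^(-m)) * (s^m * wf 3 2 0 * s^(-m))⁻¹ * (s^m * wf 3 1 0 * s^(-m))⁻¹ * (s^m * wf 3 0 0 * s^(-m))⁻¹ = s^m * (wa 3 0 * (wf 3 1 0)⁻¹ * wa 3 1 * (wf 3 2 0)⁻¹ * (wf 3 1 0)⁻¹ * (wf 3 0 0)⁻¹) * s^(-m) := by group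
    _ = 1 := by rw [R4conc]; group

-- R2
lemma R2conc : wa 3 0 * wf 3 1 0 * wa 3 1 * (wf 3 2 0)⁻¹ * wa 3 2 * wf 3 3 0 * (wa 3 2)⁻¹ *
    (wf 3 2 0)⁻¹ * (wa 3 1)⁻¹ * wf 3 1 0 * (wa 3 0)⁻¹ * (wf 3 0 0)⁻¹ = 1 := by
  have hX : p*(s*u*s*u⁻¹*s⁻¹*u⁻¹)*p = 1 := by
    rw [show s*u*s*u⁻¹*s⁻¹*u⁻¹ = (s*u*s)*(u*s*u)⁻¹ by group, braid]
    simp only [mul_inv_cancel, mul_one, hp]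
  have hX' : p*(s*(p*q*s*(q*p))*s*(p*q*s*(q*p))⁻¹*s⁻¹*(p*q*s*(q*p))⁻¹)*p = 1 := by
    rw [← u_eq2]; exact hX
  rw [wa0, wa1, wa2, wf0, wf1, wf2, wf3]
  calc (p*s*p*s⁻¹) * (s*(q*p)*s⁻¹) * (s*(p*s*p*s⁻¹)*s⁻¹) * (s*s*(q*p)*s⁻¹*s⁻¹)⁻¹ * (s*s*(p*s*p*s⁻¹)*s⁻¹*s⁻¹) * (s*s*s*(q*p)*s⁻¹*s⁻¹*s⁻¹) * (s*s*(p*s*p*s⁻¹)*s⁻¹*s⁻¹)⁻¹ * (s*s*(q*p)*s⁻¹*s⁻¹)⁻¹ * (s*(p*s*p*s⁻¹)*s⁻¹)⁻¹ * (s*(q*p)*s⁻¹) * (p*s*p*s⁻¹)⁻¹ * (q*p)⁻¹ = p*(s*(p*q*s*(q*p))*s*(p*q*s*(q*p))⁻¹*s⁻¹*(p*q*s*(q*p))⁻¹)*p := by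
        simp only [mul_inv_rev, inv_inv, p_inv, q_inv, mul_assoc, mul_inv_cancel_left,
          inv_mul_cancel_left, mul_inv_cancel, inv_mul_cancel, pp', qq', hp, hq, one_mul, mul_one,
          inv_one]
    _ = 1 := hX'

lemma R2f (m : ℤ) : wa 3 m * wf 3 (m+1) 0 * wa 3 (m+1) * (wf 3 (m+2) 0)⁻¹ * wa 3 (m+2) *
    wf 3 (m+3) 0 * (wa 3 (m+2))⁻¹ * (wf 3 (m+2) 0)⁻¹ * (wa 3 (m+1))⁻¹ * wf 3 (m+1) 0 *
    (wa 3 m)⁻¹ * (wf 3 m 0)⁻¹ = 1 := by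
  have h1 := f_shift m 1; have h2 := f_shift m 2; have h3 := f_shift m 3
  have h0 : wf 3 m 0 = s^m * wf 3 0 0 * s^(-m) := by
    have := f_shift m 0; rwa [add_zero] at this
  have g1 := a_shift m 1; have g2 := a_shift m 2
  have g0 : wa 3 m = s^m * wa 3 0 * s^(-m) := by
    have := a_shift m 0; rwa [add_zero] at this
  rw [h1, h2, h3, h0, g1, g2, g0]
  calc (s^m * wa 3 0 * s^(-m)) * (s^m * wf 3 1 0 * s^(-m)) * (s^m * wa 3 1 * s^(-m)) * (s^m * wf 3 2 0 * s^(-m))⁻¹ * (s^m * wa 3 2 * s^(-m)) * (s^m * wf 3 3 0 * s^(-m)) * (s^m * wa 3 2 * s^(-m))⁻¹ * (s^m * wf 3 2 0 * s^(-m))⁻¹ * (s^m * wa 3 1 * s^(-m))⁻¹ * (s^m * wf 3 1 0 * s^(-m)) * (s^m * wa 3 0 * s^(-m))⁻¹ * (s^m * wf 3 0 0 * s^(-m))⁻¹ = s^m * (wa 3 0 * wf 3 1 0 * wa 3 1 * (wf 3 2 0)⁻¹ * wa 3 2 * wf 3 3 0 * (wa 3 2)⁻¹ * (wf 3 2 0)⁻¹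 * (wa 3 1)⁻¹ * wf 3 1 0 * (wa 3 0)⁻¹ * (wf 3 0 0)⁻¹) * s^(-m) := by group
    _ = 1 := by rw [R2conc]; group

-- chunk 4 : projection to the abelianization Z x Z/2
abbrev Qg := Multiplicative (ℤ × ZMod 2)

def qgen : VBGen 3 → Qg :=
  fun x => Multiplicative.ofAdd (Sum.elim (fun _ => ((1:ℤ), (0:ZMod 2)))
    (fun _ => ((0:ℤ), (1:ZMod 2))) x)

lemma fσ_val (i : ℕ) (h1 : 1 ≤ i) (h2 : i - 1 < 3 - 1) :
    fσ 3 i = FreeGroup.of (Sum.inl ⟨i-1, h2⟩) := dif_pos ⟨h1, h2⟩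

lemma fρ_val (i : ℕ) (h1 : 1 ≤ i) (h2 : i - 1 < 3 - 1) :
    fρ 3 i = FreeGroup.of (Sum.inr ⟨i-1, h2⟩) := dif_pos ⟨h1, h2⟩

lemma lift_fσ (i : ℕ) (h1 : 1 ≤ i) (h2 : i - 1 < 3 - 1) :
    FreeGroup.lift qgen (fσ 3 i) = Multiplicative.ofAdd ((1:ℤ), (0:ZMod 2)) := by
  rw [fσ_val i h1 h2, FreeGroup.lift_apply_of]; rfl

lemma lift_fρ (i : ℕ) (h1 : 1 ≤ i) (h2 : i - 1 < 3 - 1) :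
    FreeGroup.lift qgen (fρ 3 i) = Multiplicative.ofAdd ((0:ℤ), (1:ZMod 2)) := by
  rw [fρ_val i h1 h2, FreeGroup.lift_apply_of]; rfl

lemma hπ : ∀ r ∈ wbRels 3, FreeGroup.lift qgen r = 1 := by
  rintro r hr
  rcases hr with hv | he
  · rcases hv with hv | h3
    · rcases hv with h1 | h2
      · obtain ⟨i, j, hi, hij, hj, -⟩ := h1; omega
      · obtain ⟨i, hi, hij, hr⟩ := h2
        have e1 := lift_fσ i hi (by omega)
        have e2 := lift_fσ (i+1) (by omega) (by omega)
        have e3 := lift_fρ i hi (by omega)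
        have e4 := lift_fρ (i+1) (by omega) (by omega)
        rcases hr with hr | hr | hr <;> subst hr <;>
          simp only [map_mul, map_inv, e1, e2, e3, e4] <;> decide
    · obtain ⟨i, hi, hij, hr⟩ := h3
      have e3 := lift_fρ i hi (by omega)
      subst hr
      simp only [map_mul, e3]; decide
  · obtain ⟨i, hi, hij, hr⟩ := he
    have e1 := lift_fσ i hi (by omega)
    have e2 := lift_fσ (i+1) (by omega) (by omega)
    have e3 := lift_fρ i hi (by omega)
    have e4 := lift_fρ (i+1) (by omega) (by omega)
    subst hr
    simp only [map_mul, map_inv, e1, e2, e3, e4]; decide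

def Wproj : WB 3 →* Qg := PresentedGroup.toGroup hπ

lemma Wproj_mk (x : FreeGroup (VBGen 3)) :
    Wproj (PresentedGroup.mk (wbRels 3) x) = FreeGroup.lift qgen x := rfl

lemma Wproj_s : Wproj s = Multiplicative.ofAdd ((1:ℤ), (0:ZMod 2)) := by
  rw [wσ, Wproj_mk]; exact lift_fσ 1 (by norm_num) (by norm_num)
lemma Wproj_u : Wproj u = Multiplicative.ofAdd ((1:ℤ), (0:ZMod 2)) := by
  rw [wσ, Wproj_mk]; exact lift_fσ 2 (by norm_num) (by norm_num)
lemma Wproj_p : Wproj p = Multiplicative.ofAdd ((0:ℤ), (1:ZMod 2)) := by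
  rw [wρ, Wproj_mk]; exact lift_fρ 1 (by norm_num) (by norm_num)
lemma Wproj_q : Wproj q = Multiplicative.ofAdd ((0:ℤ), (1:ZMod 2)) := by
  rw [wρ, Wproj_mk]; exact lift_fρ 2 (by norm_num) (by norm_num)

-- chunk 5 : commutator subgroup = kernel of Wproj, generated by the wa/wf
def πz (x : WB 3) : ℤ := (Multiplicative.toAdd (Wproj x)).1
def πe (x : WB 3) : ZMod 2 := (Multiplicative.toAdd (Wproj x)).2

lemma zmod2_neg : ∀ a : ZMod 2, -a = a := by decide
lemma zmod2_cases (e : ZMod 2) : e = 0 ∨ e = 1 := by revert e; decide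
lemma val0 : ZMod.val (0 : ZMod 2) = 0 := rfl
lemma val1 : ZMod.val (1 : ZMod 2) = 1 := rfl
lemma h2z : (1 : ZMod 2) + 1 = 0 := rfl

lemma πz_mul (x y : WB 3) : πz (x*y) = πz x + πz y := by
  simp [πz, map_mul]
lemma πe_mul (x y : WB 3) : πe (x*y) = πe x + πe y := by
  simp [πe, map_mul]
lemma πz_inv (x : WB 3) : πz x⁻¹ = -πz x := by simp [πz, map_inv]
lemma πe_inv (x : WB 3) : πe x⁻¹ = πe x := by
  simp only [πe, map_inv, toAdd_inv, Prod.snd_neg, zmod2_neg]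

lemma πz_one : πz 1 = 0 := by simp [πz]
lemma πe_one : πe 1 = 0 := by simp [πe]

lemma πz_s : πz s = 1 := by simp [πz, Wproj_s]
lemma πe_s : πe s = 0 := by simp [πe, Wproj_s]
lemma πz_u : πz u = 1 := by simp [πz, Wproj_u]
lemma πe_u : πe u = 0 := by simp [πe, Wproj_u]
lemma πz_p : πz p = 0 := by simp [πz, Wproj_p]
lemma πe_p : πe p = 1 := by simp [πe, Wproj_p]
lemma πz_q : πz q = 0 := by simp [πz, Wproj_q]
lemma πe_q : πe q = 1 := by simp [πe, Wproj_q]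

def sect (k : ℤ) (e : ZMod 2) : WB 3 := s^k * p^(e.val)

def SGen : Set (WB 3) := Set.range (wa 3) ∪ Set.range (fun m => wf 3 m 0)

def HH : Subgroup (WB 3) := Subgroup.closure SGen

lemma wa_memH (m : ℤ) : wa 3 m ∈ HH := Subgroup.subset_closure (Or.inl ⟨m, rfl⟩)
lemma wf_memH (m : ℤ) : wf 3 m 0 ∈ HH := Subgroup.subset_closure (Or.inr ⟨m, rfl⟩)

-- the Schreier computations
lemma schreier_s (k : ℤ) (e : ZMod 2) : sect k e * s * (sect (k + 1) (e + 0))⁻¹ ∈ HH := by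
  rcases zmod2_cases e with he | he <;> subst he
  · have : sect k 0 * s * (sect (k+1) (0+0))⁻¹ = 1 := by
      simp only [sect, add_zero, val0, pow_zero, mul_one, mul_inv_rev]; group
    rw [this]; exact one_mem _
  · have : sect k 1 * s * (sect (k+1) (1+0))⁻¹ = wa 3 k := by
      simp only [sect, add_zero, val1, pow_one, mul_inv_rev, p_inv]
      rw [wa]; group
    rw [this]; exact wa_memH k

lemma schreier_u (k : ℤ) (e : ZMod 2) : sect k e * u * (sect (k + 1) (e + 0))⁻¹ ∈ HH := by
  rcases zmod2_cases e with he | he <;> subst he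
  · have : sect k 0 * u * (sect (k+1) (0+0))⁻¹ = (wf 3 k 0)⁻¹ * wf 3 (k+1) 0 := by
      simp only [sect, add_zero, val0, pow_zero, mul_one, mul_inv_rev]
      rw [wf_eq, wf_eq, u_eq]; group
    rw [this]; exact mul_mem (inv_mem (wf_memH k)) (wf_memH (k+1))
  · have core : q*s*q*s⁻¹ = (q*p)*(p*s*p*s⁻¹)*(s*(q*p)*s⁻¹)⁻¹ := by
      simp only [mul_inv_rev, inv_inv, p_inv, q_inv, mul_assoc, mul_inv_cancel_left,
        inv_mul_cancel_left, pp', qq', one_mul, mul_one]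
    have : sect k 1 * u * (sect (k+1) (1+0))⁻¹ = wf 3 k 0 * wa 3 k * (wf 3 (k+1) 0)⁻¹ := by
      simp only [sect, add_zero, val1, pow_one, mul_inv_rev, p_inv]
      have e1 : s^k*p*u*(p*(s^(k+1))⁻¹) = s^k*(p*u*p)*s⁻¹*s^(-k) := by group
      rw [e1, pup]
      calc s^k*(q*s*q)*s⁻¹*s^(-k) = s^k*(q*s*q*s⁻¹)*s^(-k) := by group
        _ = s^k*((q*p)*(p*s*p*s⁻¹)*(s*(q*p)*s⁻¹)⁻¹)*s^(-k) := by rw [core]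
        _ = wf 3 k 0 * wa 3 k * (wf 3 (k+1) 0)⁻¹ := by rw [wf_eq, wf_eq, wa]; group
    rw [this]; exact mul_mem (mul_mem (wf_memH k) (wa_memH k)) (inv_mem (wf_memH (k+1)))

lemma schreier_p (k : ℤ) (e : ZMod 2) : sect k e * p * (sect (k + 0) (e + 1))⁻¹ ∈ HH := by
  rcases zmod2_cases e with he | he <;> subst he
  · have : sect k 0 * p * (sect (k+0) (0+1))⁻¹ = 1 := by
      simp only [sect, add_zero, zero_add, val1, pow_one, val0, pow_zero, mul_one]
      group
    rw [this]; exact one_mem _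
  · have : sect k 1 * p * (sect (k+0) (1+1))⁻¹ = 1 := by
      simp only [sect, add_zero, h2z, val0, val1, pow_zero, pow_one, mul_one, mul_inv_rev]
      calc s^k*p*p*(s^k)⁻¹ = s^k*(p*p)*(s^k)⁻¹ := by group
        _ = 1 := by rw [hp]; group
    rw [this]; exact one_mem _

lemma schreier_q (k : ℤ) (e : ZMod 2) : sect k e * q * (sect (k + 0) (e + 1))⁻¹ ∈ HH := by
  rcases zmod2_cases e with he | he <;> subst he
  · have : sect k 0 * q * (sect (k+0) (0+1))⁻¹ = wf 3 k 0 := by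
      simp only [sect, add_zero, zero_add, val1, pow_one, mul_inv_rev, p_inv, val0, pow_zero,
        mul_one]
      rw [wf_eq]; group
    rw [this]; exact wf_memH k
  · have : sect k 1 * q * (sect (k+0) (1+1))⁻¹ = (wf 3 k 0)⁻¹ := by
      simp only [sect, add_zero, h2z, val0, val1, pow_zero, pow_one, mul_one, mul_inv_rev]
      rw [wf_eq, (by group : ((s:WB 3)^k*(q*p)*s^(-k))⁻¹ = s^k*((q*p)⁻¹)*s^(-k)), tinv]
      group
    rw [this]; exact (inv_mem (wf_memH k))

-- chunk 6 : kernel of Wproj is contained in HH; commutator = ker Wproj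
lemma of_inl0 : (PresentedGroup.of (Sum.inl (⟨0, by norm_num⟩ : Fin 2)) : WB 3) = s := by
  show PresentedGroup.mk (wbRels 3) (FreeGroup.of (Sum.inl ⟨0, by norm_num⟩)) = _
  rw [wσ, fσ_val 1 (by norm_num) (by norm_num)]

lemma of_inl1 : (PresentedGroup.of (Sum.inl (⟨1, by norm_num⟩ : Fin 2)) : WB 3) = u := by
  show PresentedGroup.mk (wbRels 3) (FreeGroup.of (Sum.inl ⟨1, by norm_num⟩)) = _
  rw [wσ, fσ_val 2 (by norm_num) (by norm_num)]

lemma of_inr0 : (PresentedGroup.of (Sum.inr (⟨0, by norm_num⟩ : Fin 2)) : WB 3) = p := by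
  show PresentedGroup.mk (wbRels 3) (FreeGroup.of (Sum.inr ⟨0, by norm_num⟩)) = _
  rw [wρ, fρ_val 1 (by norm_num) (by norm_num)]

lemma of_inr1 : (PresentedGroup.of (Sum.inr (⟨1, by norm_num⟩ : Fin 2)) : WB 3) = q := by
  show PresentedGroup.mk (wbRels 3) (FreeGroup.of (Sum.inr ⟨1, by norm_num⟩)) = _
  rw [wρ, fρ_val 2 (by norm_num) (by norm_num)]

lemma schreier_main (x : WB 3) :
    ∀ k : ℤ, ∀ e : ZMod 2, sect k e * x * (sect (k + πz x) (e + πe x))⁻¹ ∈ HH := by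
  have hx : x ∈ Subgroup.closure (Set.range (PresentedGroup.of : VBGen 3 → WB 3)) := by
    rw [PresentedGroup.closure_range_of]; trivial
  induction hx using Subgroup.closure_induction with
  | mem g hg =>
    obtain ⟨v, rfl⟩ := hg
    rcases v with i | i
    · rcases i with ⟨iv, hiv⟩
      interval_cases iv
      · rw [of_inl0]; intro k e
        rw [πz_s, πe_s]; exact schreier_s k e
      · rw [of_inl1]; intro k e
        rw [πz_u, πe_u]; exact schreier_u k e
    · rcases i with ⟨iv, hiv⟩
      interval_cases iv
      · rw [of_inr0]; intro k e
        rw [πz_p, πe_p]; exact schreier_p k e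
      · rw [of_inr1]; intro k e
        rw [πz_q, πe_q]; exact schreier_q k e
  | one =>
    intro k e
    rw [πz_one, πe_one, add_zero, add_zero, mul_one]
    rw [mul_inv_cancel]; exact one_mem _
  | mul x y hx hy ihx ihy =>
    intro k e
    have h1 := ihx k e
    have h2 := ihy (k + πz x) (e + πe x)
    have e1 : sect k e * (x*y) * (sect (k + πz (x*y)) (e + πe (x*y)))⁻¹ =
        (sect k e * x * (sect (k + πz x) (e + πe x))⁻¹) *
        (sect (k + πz x) (e + πe x) * y * (sect ((k + πz x) + πz y) ((e + πe x) + πe y))⁻¹) := by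
      rw [πz_mul, πe_mul, ← add_assoc, ← add_assoc]; group
    rw [e1]; exact mul_mem h1 h2
  | inv x hx ihx =>
    intro k e
    have h1 := ihx (k + πz x⁻¹) (e + πe x⁻¹)
    have e1 : sect k e * x⁻¹ * (sect (k + πz x⁻¹) (e + πe x⁻¹))⁻¹ =
        (sect (k + πz x⁻¹) (e + πe x⁻¹) * x *
          (sect ((k + πz x⁻¹) + πz x) ((e + πe x⁻¹) + πe x))⁻¹)⁻¹ := by
      have hk : (k + πz x⁻¹) + πz x = k := by rw [πz_inv]; ring
      have he' : (e + πe x⁻¹) + πe x = e := by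
        rw [πe_inv, add_assoc, ← two_mul]
        have : (2 : ZMod 2) * πe x = 0 := by
          rw [(by decide : (2 : ZMod 2) = 0), zero_mul]
        rw [this, add_zero]
      rw [hk, he']; group
    rw [e1]; exact inv_mem h1

lemma ker_le_HH : Wproj.ker ≤ HH := by
  intro x hx
  have h := schreier_main x 0 0
  have hz : πz x = 0 := by
    simp only [πz, MonoidHom.mem_ker.mp hx]; rfl
  have he : πe x = 0 := by
    simp only [πe, MonoidHom.mem_ker.mp hx]; rfl
  rw [hz, he, add_zero, add_zero] at h
  have hs : sect 0 0 = 1 := by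
    simp only [sect, val0, pow_zero, zpow_zero, mul_one]
  rw [hs, one_mul, inv_one, mul_one] at h
  exact h

open scoped commutatorElement

lemma t_mem_comm : q * p ∈ commutator (WB 3) := by
  have h1 : ⁅q, p⁆ = (q*p)*(q*p) := by
    rw [commutatorElement_def, q_inv, p_inv]; group
  have h2 : q * p = ⁅q, p⁆ * ⁅q, p⁆ := by
    rw [h1]
    calc q*p = (q*p)*((q*p)*(q*p)*(q*p)) := by rw [t3, mul_one]
      _ = (q*p)*(q*p)*((q*p)*(q*p)) := by group
  rw [h2]
  exact mul_mem (Subgroup.commutator_mem_commutator (Subgroup.mem_top q) (Subgroup.mem_top p))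
    (Subgroup.commutator_mem_commutator (Subgroup.mem_top q) (Subgroup.mem_top p))

lemma a0_mem_comm : p*s*p*s⁻¹ ∈ commutator (WB 3) := by
  have h1 : p*s*p*s⁻¹ = ⁅p, s⁆ := by rw [commutatorElement_def, p_inv]
  rw [h1]
  exact Subgroup.commutator_mem_commutator (Subgroup.mem_top p) (Subgroup.mem_top s)

lemma wa_mem_comm (m : ℤ) : wa 3 m ∈ commutator (WB 3) := by
  rw [wa, zpow_neg]
  exact Subgroup.Normal.conj_mem (Subgroup.commutator_normal ⊤ ⊤) _ a0_mem_comm (s^m)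

lemma wf_mem_comm (m : ℤ) : wf 3 m 0 ∈ commutator (WB 3) := by
  rw [wf_eq, zpow_neg]
  exact Subgroup.Normal.conj_mem (Subgroup.commutator_normal ⊤ ⊤) _ t_mem_comm (s^m)

lemma HH_le_comm : HH ≤ commutator (WB 3) := by
  rw [HH]
  apply (Subgroup.closure_le _).2
  rintro x (⟨m, rfl⟩ | ⟨m, rfl⟩)
  · exact wa_mem_comm m
  · exact wf_mem_comm m

lemma comm_eq_ker : commutator (WB 3) = Wproj.ker := by
  apply le_antisymm
  · exact Abelianization.commutator_subset_ker Wproj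
  · exact fun x hx => HH_le_comm (ker_le_HH hx)

lemma comm_eq_HH : commutator (WB 3) = HH :=
  le_antisymm (fun x hx => ker_le_HH (comm_eq_ker ▸ hx)) HH_le_comm

-- chunk 7 : the homomorphism Φ from the presented group to WB 3
def afgen : ℤ ⊕ ℤ → WB 3 := fun x => Sum.elim (wa 3) (fun m => wf 3 m 0) x

lemma hΦ : ∀ r ∈ wb3Rels, FreeGroup.lift afgen r = 1 := by
  rintro r ⟨m, hr | hr | hr | hr⟩ <;> subst hr <;>
    simp only [map_mul, map_inv, map_pow, FreeGroup.lift_apply_of, afgen, Sum.elim_inl, Sum.elim_inr]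
  · exact R1f m
  · exact R2f m
  · exact R3f m
  · exact R4f m

def Φ : PresentedGroup wb3Rels →* WB 3 := PresentedGroup.toGroup hΦ

lemma Φ_inl (m : ℤ) : Φ (PresentedGroup.of (Sum.inl m)) = wa 3 m := by
  rw [Φ, PresentedGroup.toGroup.of]; rfl

lemma Φ_inr (m : ℤ) : Φ (PresentedGroup.of (Sum.inr m)) = wf 3 m 0 := by
  rw [Φ, PresentedGroup.toGroup.of]; rfl

lemma Φ_mem_comm (x : PresentedGroup wb3Rels) : Φ x ∈ commutator (WB 3) := by
  refine PresentedGroup.generated_by wb3Rels ((commutator (WB 3)).comap Φ) ?_ x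
  rintro (m | m)
  · simp only [Subgroup.mem_comap, Φ_inl]; exact wa_mem_comm m
  · simp only [Subgroup.mem_comap, Φ_inr]; exact wf_mem_comm m

def Φ' : PresentedGroup wb3Rels →* commutator (WB 3) :=
  Φ.codRestrict (commutator (WB 3)) Φ_mem_comm

lemma Φ'_surj : Function.Surjective Φ' := by
  intro y
  have hy : (y : WB 3) ∈ HH := by
    rw [← comm_eq_HH]; exact y.2
  have hle : HH ≤ Φ.range := by
    rw [HH]
    apply (Subgroup.closure_le _).2
    rintro x (⟨m, rfl⟩ | ⟨m, rfl⟩)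
    · exact ⟨PresentedGroup.of (Sum.inl m), Φ_inl m⟩
    · exact ⟨PresentedGroup.of (Sum.inr m), Φ_inr m⟩
  obtain ⟨x, hx⟩ := hle hy
  exact ⟨x, Subtype.ext hx⟩

-- chunk 8 : the wreath-type embedding
abbrev GP := PresentedGroup wb3Rels
abbrev AA : ℤ → GP := fun m => PresentedGroup.of (Sum.inl m)
abbrev FF : ℤ → GP := fun m => PresentedGroup.of (Sum.inr m)

lemma relG {r : FreeGroup (ℤ ⊕ ℤ)} (h : r ∈ wb3Rels) :
    PresentedGroup.mk wb3Rels r = 1 :=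
  (QuotientGroup.eq_one_iff r).2 (Subgroup.subset_normalClosure h)

lemma rG1 (m : ℤ) : (FF (m+1))⁻¹ * FF (m+2) * (FF (m+3))⁻¹ * FF (m+2) * (FF (m+1))⁻¹ * FF m = 1 := by
  have h := relG ⟨m, Or.inl rfl⟩
  simp only [map_mul, map_inv] at h; exact h

lemma rG2 (m : ℤ) : AA m * FF (m+1) * AA (m+1) * (FF (m+2))⁻¹ * AA (m+2) * FF (m+3) *
    (AA (m+2))⁻¹ * (FF (m+2))⁻¹ * (AA (m+1))⁻¹ * FF (m+1) * (AA m)⁻¹ * (FF m)⁻¹ = 1 := by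
  have h := relG ⟨m, Or.inr (Or.inl rfl)⟩
  simp only [map_mul, map_inv] at h; exact h

lemma rG3 (m : ℤ) : (FF m)^3 = 1 := by
  have h := relG ⟨m, Or.inr (Or.inr (Or.inl rfl))⟩
  simp only [map_pow] at h; exact h

lemma rG4 (m : ℤ) : AA m * (FF (m+1))⁻¹ * AA (m+1) * (FF (m+2))⁻¹ * (FF (m+1))⁻¹ * (FF m)⁻¹ = 1 := by
  have h := relG ⟨m, Or.inr (Or.inr (Or.inr rfl))⟩
  simp only [map_mul, map_inv] at h; exact h

lemma gF2 (m : ℤ) : FF m * FF m = (FF m)⁻¹ := by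
  apply eq_inv_of_mul_eq_one_left
  rw [← pow_three']; exact rG3 m

lemma gR4c (m : ℤ) : AA m * (FF (m+1))⁻¹ * AA (m+1) = FF m * FF (m+1) * FF (m+2) := by
  rw [← mul_inv_eq_one]
  have e : AA m * (FF (m+1))⁻¹ * AA (m+1) * (FF m * FF (m+1) * FF (m+2))⁻¹ =
      AA m * (FF (m+1))⁻¹ * AA (m+1) * (FF (m+2))⁻¹ * (FF (m+1))⁻¹ * (FF m)⁻¹ := by group
  rw [e]; exact rG4 m

-- identity (alpha)
lemma gAlpha (k : ℤ) : (FF (k+1))⁻¹ * FF (k+2) =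
    ((FF k)⁻¹ * FF (k+1)) * ((FF (k+2))⁻¹ * FF (k+3)) := by
  rw [← mul_inv_eq_one]
  have e : (FF (k+1))⁻¹ * FF (k+2) * (((FF k)⁻¹ * FF (k+1)) * ((FF (k+2))⁻¹ * FF (k+3)))⁻¹ =
      (FF (k+1))⁻¹ * FF (k+2) * (FF (k+3))⁻¹ * FF (k+2) * (FF (k+1))⁻¹ * FF k := by group
  rw [e]; exact rG1 k

-- identity (beta)
lemma gBeta (k : ℤ) : AA k * (FF (k+1) * AA (k+1) * (FF (k+2))⁻¹) * AA (k+2) =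
    (FF k * AA k * (FF (k+1))⁻¹) * AA (k+1) * (FF (k+2) * AA (k+2) * (FF (k+3))⁻¹) := by
  rw [← mul_inv_eq_one]
  have e : AA k * (FF (k+1) * AA (k+1) * (FF (k+2))⁻¹) * AA (k+2) *
      ((FF k * AA k * (FF (k+1))⁻¹) * AA (k+1) * (FF (k+2) * AA (k+2) * (FF (k+3))⁻¹))⁻¹ =
      AA k * FF (k+1) * AA (k+1) * (FF (k+2))⁻¹ * AA (k+2) * FF (k+3) *
      (AA (k+2))⁻¹ * (FF (k+2))⁻¹ * (AA (k+1))⁻¹ * FF (k+1) * (AA k)⁻¹ * (FF k)⁻¹ := by group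
  rw [e]; exact rG2 k

-- identity (gamma)
lemma gGamma (k : ℤ) : (FF k * AA k * (FF (k+1))⁻¹) * AA (k+1) =
    ((FF k)⁻¹ * FF (k+1)) * FF (k+2) := by
  calc (FF k * AA k * (FF (k+1))⁻¹) * AA (k+1) = FF k * (AA k * (FF (k+1))⁻¹ * AA (k+1)) := by
        group
    _ = FF k * (FF k * FF (k+1) * FF (k+2)) := by rw [gR4c]
    _ = (FF k * FF k) * FF (k+1) * FF (k+2) := by group
    _ = (FF k)⁻¹ * FF (k+1) * FF (k+2) := by rw [gF2]
    _ = ((FF k)⁻¹ * FF (k+1)) * FF (k+2) := by group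

-- the translation action and the semidirect product
def trE (z : Qg) : (Qg → GP) ≃* (Qg → GP) where
  toFun f := fun x => f (x * z)
  invFun f := fun x => f (x * z⁻¹)
  left_inv f := funext fun x => by
    show f (x * z⁻¹ * z) = f x
    rw [inv_mul_cancel_right]
  right_inv f := funext fun x => by
    show f (x * z * z⁻¹) = f x
    rw [mul_inv_cancel_right]
  map_mul' f g := rfl

def tr : Qg →* MulAut (Qg → GP) where
  toFun := trE
  map_one' := by
    apply MulEquiv.ext; intro f; funext x
    show f (x * 1) = f x
    rw [mul_one]
  map_mul' a b := by
    apply MulEquiv.ext; intro f; funext x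
    show f (x * (a * b)) = f (x * a * b)
    rw [mul_assoc]

abbrev WD := SemidirectProduct (Qg → GP) Qg tr

lemma tr_apply (z : Qg) (f : Qg → GP) (x : Qg) : tr z f x = f (x * z) := rfl

def zσ : Qg := Multiplicative.ofAdd ((1:ℤ), (0:ZMod 2))
def zρ : Qg := Multiplicative.ofAdd ((0:ℤ), (1:ZMod 2))

def cS : Qg → GP := fun x =>
  if (Multiplicative.toAdd x).2 = 1 then AA (Multiplicative.toAdd x).1 else 1
def cU : Qg → GP := fun x =>
  if (Multiplicative.toAdd x).2 = 1
  then FF (Multiplicative.toAdd x).1 * AA (Multiplicative.toAdd x).1 *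
    (FF ((Multiplicative.toAdd x).1 + 1))⁻¹
  else (FF (Multiplicative.toAdd x).1)⁻¹ * FF ((Multiplicative.toAdd x).1 + 1)
def cQ : Qg → GP := fun x =>
  if (Multiplicative.toAdd x).2 = 1 then (FF (Multiplicative.toAdd x).1)⁻¹
  else FF (Multiplicative.toAdd x).1

def ΨS : WD := ⟨cS, zσ⟩
def ΨU : WD := ⟨cU, zσ⟩
def ΨP : WD := ⟨1, zρ⟩
def ΨQ : WD := ⟨cQ, zρ⟩

lemma mulQg (a c : ℤ) (b d : ZMod 2) :
    Multiplicative.ofAdd (a, b) * Multiplicative.ofAdd (c, d) = Multiplicative.ofAdd (a+c, b+d) :=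
  rfl

lemma cS_at (k : ℤ) (e : ZMod 2) :
    cS (Multiplicative.ofAdd (k, e)) = if e = 1 then AA k else 1 := rfl
lemma cU_at (k : ℤ) (e : ZMod 2) :
    cU (Multiplicative.ofAdd (k, e)) =
      if e = 1 then FF k * AA k * (FF (k+1))⁻¹ else (FF k)⁻¹ * FF (k+1) := rfl
lemma cQ_at (k : ℤ) (e : ZMod 2) :
    cQ (Multiplicative.ofAdd (k, e)) = if e = 1 then (FF k)⁻¹ else FF k := rfl

-- chunk 9 : relations in WD
lemma gF2' (m : ℤ) : (FF m)⁻¹ * (FF m)⁻¹ = FF m := by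
  rw [← mul_inv_rev, gF2, inv_inv]

lemma x_ofAdd (x : Qg) :
    x = Multiplicative.ofAdd ((Multiplicative.toAdd x).1, (Multiplicative.toAdd x).2) := rfl

lemma relΨ_braid : ΨS * ΨU * ΨS = ΨU * ΨS * ΨU := by
  apply SemidirectProduct.ext
  · funext x
    simp only [ΨS, ΨU, SemidirectProduct.mul_left, SemidirectProduct.mul_right,
      Pi.mul_apply, tr_apply]
    rw [x_ofAdd x]
    generalize (Multiplicative.toAdd x).1 = k
    generalize (Multiplicative.toAdd x).2 = e
    simp only [zσ, mulQg, cS_at, cU_at, add_zero]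
    rcases zmod2_cases e with he | he <;> rw [he] <;>
      simp (config := { decide := true }) only [if_true, if_false, one_mul, mul_one, zero_add]
    · have h := gAlpha k; ring_nf at h ⊢; exact h
    · have h := gBeta k; ring_nf at h ⊢; exact h
  · rfl

lemma relΨ_pbraid : ΨP * ΨQ * ΨP = ΨQ * ΨP * ΨQ := by
  apply SemidirectProduct.ext
  · funext x
    simp only [ΨP, ΨQ, SemidirectProduct.mul_left, SemidirectProduct.mul_right,
      Pi.mul_apply, Pi.one_apply, tr_apply, one_mul, mul_one, map_one]
    rw [x_ofAdd x]
    generalize (Multiplicative.toAdd x).1 = k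
    generalize (Multiplicative.toAdd x).2 = e
    simp only [zρ, mulQg, cQ_at, add_zero, zero_add]
    rcases zmod2_cases e with he | he <;> rw [he] <;>
      simp (config := { decide := true }) only [if_true, if_false, one_mul, mul_one, zero_add]
    · exact (gF2 k).symm
    · exact (gF2' k).symm
  · rfl

lemma relΨ_mixed : ΨP * ΨQ * ΨS = ΨU * (ΨP * ΨQ) := by
  apply SemidirectProduct.ext
  · funext x
    simp only [ΨP, ΨQ, ΨS, ΨU, SemidirectProduct.mul_left, SemidirectProduct.mul_right,
      Pi.mul_apply, Pi.one_apply, tr_apply, one_mul, mul_one, map_one]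
    rw [x_ofAdd x]
    generalize (Multiplicative.toAdd x).1 = k
    generalize (Multiplicative.toAdd x).2 = e
    simp only [zρ, zσ, mulQg, cQ_at, cS_at, cU_at, add_zero, zero_add]
    rcases zmod2_cases e with he | he <;> rw [he] <;>
      simp (config := { decide := true }) only [if_true, if_false, one_mul, mul_one, zero_add] <;>
      ring_nf <;> group
  · rfl

lemma relΨ_p2 : ΨP * ΨP = 1 := by
  apply SemidirectProduct.ext
  · funext x
    simp only [ΨP, SemidirectProduct.mul_left, SemidirectProduct.one_left,
      Pi.mul_apply, Pi.one_apply, tr_apply, one_mul, map_one]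
  · rfl

lemma relΨ_q2 : ΨQ * ΨQ = 1 := by
  apply SemidirectProduct.ext
  · funext x
    simp only [ΨQ, SemidirectProduct.mul_left, SemidirectProduct.one_left,
      Pi.mul_apply, Pi.one_apply, tr_apply]
    rw [x_ofAdd x]
    generalize (Multiplicative.toAdd x).1 = k
    generalize (Multiplicative.toAdd x).2 = e
    simp only [zρ, mulQg, cQ_at, add_zero, zero_add]
    rcases zmod2_cases e with he | he <;> rw [he] <;>
      simp (config := { decide := true }) only [if_true, if_false, one_mul, mul_one, zero_add] <;>
      group
  · rfl

lemma relΨ_weld : ΨP * ΨU * ΨS = ΨU * ΨS * ΨQ := by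
  apply SemidirectProduct.ext
  · funext x
    simp only [ΨP, ΨQ, ΨS, ΨU, SemidirectProduct.mul_left, SemidirectProduct.mul_right,
      Pi.mul_apply, Pi.one_apply, tr_apply, one_mul, mul_one, map_one]
    rw [x_ofAdd x]
    generalize (Multiplicative.toAdd x).1 = k
    generalize (Multiplicative.toAdd x).2 = e
    simp only [zρ, zσ, mulQg, cQ_at, cS_at, cU_at, add_zero, zero_add]
    rcases zmod2_cases e with he | he <;> rw [he] <;>
      simp (config := { decide := true }) only [if_true, if_false, one_mul, mul_one, zero_add]
    · have h := gGamma k; ring_nf at h ⊢; exact h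
    · symm
      rw [mul_inv_eq_iff_eq_mul]
      have h := gGamma k; ring_nf at h ⊢; exact h
  · rfl

-- chunk 10 : the homomorphism Ψ : WB 3 →* WD
def ψgen : VBGen 3 → WD := fun x =>
  Sum.elim (fun i => if i = (0 : Fin 2) then ΨS else ΨU)
    (fun i => if i = (0 : Fin 2) then ΨP else ΨQ) x

lemma lift_ψ_σ (i : ℕ) (h1 : 1 ≤ i) (h2 : i - 1 < 3 - 1) :
    FreeGroup.lift ψgen (fσ 3 i) = if i = 1 then ΨS else ΨU := by
  rw [fσ_val i h1 h2, FreeGroup.lift_apply_of]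
  show (if (⟨i-1,h2⟩ : Fin 2) = 0 then ΨS else ΨU) = _
  rcases (by omega : i = 1 ∨ i = 2) with rfl | rfl
  · rw [if_pos rfl, if_pos (by norm_num)]
  · rw [if_neg (by norm_num), if_neg (by decide)]

lemma lift_ψ_ρ (i : ℕ) (h1 : 1 ≤ i) (h2 : i - 1 < 3 - 1) :
    FreeGroup.lift ψgen (fρ 3 i) = if i = 1 then ΨP else ΨQ := by
  rw [fρ_val i h1 h2, FreeGroup.lift_apply_of]
  show (if (⟨i-1,h2⟩ : Fin 2) = 0 then ΨP else ΨQ) = _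
  rcases (by omega : i = 1 ∨ i = 2) with rfl | rfl
  · rw [if_pos rfl, if_pos (by norm_num)]
  · rw [if_neg (by norm_num), if_neg (by decide)]

lemma rel_braid_one {G : Type*} [Group G] (x y : G) (h : x*y*x = y*x*y) :
    x*y*x*y⁻¹*x⁻¹*y⁻¹ = 1 := by
  rw [show x*y*x*y⁻¹*x⁻¹*y⁻¹ = (x*y*x)*(y*x*y)⁻¹ by group, h]; group

lemma rel_mixed_one {G : Type*} [Group G] (x y z w : G) (h : x*y*z = w*(x*y)) :
    x*y*z*y⁻¹*x⁻¹*w⁻¹ = 1 := by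
  rw [show x*y*z*y⁻¹*x⁻¹*w⁻¹ = (x*y*z)*(w*(x*y))⁻¹ by group, h]; group

lemma rel_weld_one {G : Type*} [Group G] (x y z w : G) (h : x*y*z = y*z*w) :
    x*y*z*w⁻¹*z⁻¹*y⁻¹ = 1 := by
  rw [show x*y*z*w⁻¹*z⁻¹*y⁻¹ = (x*y*z)*(y*z*w)⁻¹ by group, h]; group

lemma hΨ : ∀ r ∈ wbRels 3, FreeGroup.lift ψgen r = 1 := by
  rintro r hr
  rcases hr with hv | he
  · rcases hv with hv | h3
    · rcases hv with h1 | h2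
      · obtain ⟨i, j, hi, hij, hj, -⟩ := h1; omega
      · obtain ⟨i, hi, hij, hr⟩ := h2
        have hi1 : i = 1 := by omega
        subst hi1
        have e1 := lift_ψ_σ 1 (by norm_num) (by norm_num)
        have e2 := lift_ψ_σ 2 (by norm_num) (by norm_num)
        have e3 := lift_ψ_ρ 1 (by norm_num) (by norm_num)
        have e4 := lift_ψ_ρ 2 (by norm_num) (by norm_num)
        rw [if_pos rfl] at e1 e3
        rw [if_neg (by norm_num)] at e2 e4
        rcases hr with hr | hr | hr <;> subst hr <;>
          simp only [map_mul, map_inv, e1, e2, e3, e4]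
        · exact rel_braid_one _ _ relΨ_braid
        · exact rel_braid_one _ _ relΨ_pbraid
        · exact rel_mixed_one _ _ _ _ relΨ_mixed
    · obtain ⟨i, hi, hij, hr⟩ := h3
      have e3 := lift_ψ_ρ i hi (by omega)
      subst hr
      simp only [map_mul, e3]
      rcases (by omega : i = 1 ∨ i = 2) with rfl | rfl
      · rw [if_pos rfl]; exact relΨ_p2
      · rw [if_neg (by norm_num)]; exact relΨ_q2
  · obtain ⟨i, hi, hij, hr⟩ := he
    have hi1 : i = 1 := by omega
    subst hi1
    have e1 := lift_ψ_σ 1 (by norm_num) (by norm_num)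
    have e2 := lift_ψ_σ 2 (by norm_num) (by norm_num)
    have e3 := lift_ψ_ρ 1 (by norm_num) (by norm_num)
    have e4 := lift_ψ_ρ 2 (by norm_num) (by norm_num)
    rw [if_pos rfl] at e1 e3
    rw [if_neg (by norm_num)] at e2 e4
    subst hr
    simp only [map_mul, map_inv, e1, e2, e3, e4]
    exact rel_weld_one _ _ _ _ relΨ_weld

def Ψ : WB 3 →* WD := PresentedGroup.toGroup hΨ

lemma Ψ_mk (x : FreeGroup (VBGen 3)) :
    Ψ (PresentedGroup.mk (wbRels 3) x) = FreeGroup.lift ψgen x := rfl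

lemma Ψ_s : Ψ s = ΨS := by
  rw [wσ, Ψ_mk]
  have := lift_ψ_σ 1 (by norm_num) (by norm_num)
  rwa [if_pos rfl] at this
lemma Ψ_u : Ψ u = ΨU := by
  rw [wσ, Ψ_mk]
  have := lift_ψ_σ 2 (by norm_num) (by norm_num)
  rwa [if_neg (by norm_num)] at this
lemma Ψ_p : Ψ p = ΨP := by
  rw [wρ, Ψ_mk]
  have := lift_ψ_ρ 1 (by norm_num) (by norm_num)
  rwa [if_pos rfl] at this
lemma Ψ_q : Ψ q = ΨQ := by
  rw [wρ, Ψ_mk]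
  have := lift_ψ_ρ 2 (by norm_num) (by norm_num)
  rwa [if_neg (by norm_num)] at this

lemma rightΨ (w : WB 3) : (Ψ w).right = Wproj w := by
  have : (SemidirectProduct.rightHom.comp Ψ : WB 3 →* Qg) = Wproj := by
    apply PresentedGroup.ext
    rintro (i | i) <;> rcases i with ⟨iv, hiv⟩ <;> interval_cases iv
    · rw [MonoidHom.comp_apply, of_inl0, Ψ_s, Wproj_s]; rfl
    · rw [MonoidHom.comp_apply, of_inl1, Ψ_u, Wproj_u]; rfl
    · rw [MonoidHom.comp_apply, of_inr0, Ψ_p, Wproj_p]; rfl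
    · rw [MonoidHom.comp_apply, of_inr1, Ψ_q, Wproj_q]; rfl
  exact DFunLike.congr_fun this w

-- chunk 11 : evaluation of Ψ on wa/wf, the inverse homomorphism, assembly
lemma invQg (a : ℤ) (b : ZMod 2) :
    (Multiplicative.ofAdd (a, b))⁻¹ = Multiplicative.ofAdd (-a, -b) := rfl

lemma leftS : ΨS.left = cS := rfl
lemma leftU : ΨU.left = cU := rfl
lemma leftP : ΨP.left = (1 : Qg → GP) := rfl
lemma leftQ : ΨQ.left = cQ := rfl
lemma rightS : ΨS.right = zσ := rfl
lemma rightU : ΨU.right = zσ := rfl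
lemma rightP : ΨP.right = zρ := rfl
lemma rightQ : ΨQ.right = zρ := rfl

def K : Subgroup WD where
  carrier := {w | (∃ j : ℤ, w.right = Multiplicative.ofAdd (j, (0:ZMod 2))) ∧
    ∀ k : ℤ, w.left (Multiplicative.ofAdd (k, (0:ZMod 2))) = 1}
  one_mem' := by
    constructor
    · exact ⟨0, rfl⟩
    · intro k; rfl
  mul_mem' := by
    rintro a b ⟨⟨j1, hj1⟩, ha⟩ ⟨⟨j2, hj2⟩, hb⟩
    constructor
    · exact ⟨j1 + j2, by rw [SemidirectProduct.mul_right, hj1, hj2, mulQg, add_zero]⟩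
    · intro k
      rw [SemidirectProduct.mul_left, Pi.mul_apply, tr_apply, ha k, hj1, mulQg, add_zero, hb,
        one_mul]
  inv_mem' := by
    rintro a ⟨⟨j, hj⟩, ha⟩
    constructor
    · refine ⟨-j, ?_⟩
      rw [SemidirectProduct.inv_right, hj, invQg, neg_zero]
    · intro k
      rw [SemidirectProduct.inv_left, tr_apply, Pi.inv_apply, hj, invQg, neg_zero, mulQg,
        add_zero, ha (k + -j), inv_one]

lemma ΨS_mem_K : ΨS ∈ K := by
  constructor
  · exact ⟨1, rfl⟩
  · intro k
    rw [leftS, cS_at, if_neg (by decide)]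

lemma ΨS_zpow_mem_K (m : ℤ) : ΨS^m ∈ K := Subgroup.zpow_mem K ΨS_mem_K m

lemma ΨS_zpow_right (m : ℤ) : (ΨS^m).right = Multiplicative.ofAdd (m, (0:ZMod 2)) := by
  rw [← SemidirectProduct.rightHom_eq_right, map_zpow]
  rw [show SemidirectProduct.rightHom ΨS = zσ from rfl]
  calc (zσ)^m = Multiplicative.ofAdd (Multiplicative.toAdd ((zσ)^m)) := rfl
    _ = Multiplicative.ofAdd (m • Multiplicative.toAdd zσ) := by rw [toAdd_zpow]
    _ = Multiplicative.ofAdd (m, (0:ZMod 2)) := by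
        rw [show Multiplicative.toAdd zσ = ((1:ℤ), (0:ZMod 2)) from rfl, Prod.smul_mk,
          smul_zero, smul_eq_mul, mul_one]

lemma Ψ_wa_left (m : ℤ) : (Ψ (wa 3 m)).left 1 = AA m := by
  rw [wa]
  simp only [map_mul, map_zpow, map_inv, Ψ_s, Ψ_p]
  simp only [SemidirectProduct.mul_left, SemidirectProduct.mul_right,
    SemidirectProduct.inv_left, SemidirectProduct.inv_right, Pi.mul_apply, Pi.inv_apply,
    Pi.one_apply, tr_apply, leftP, leftS, rightP, rightS, one_mul, mul_one, map_one]
  rw [ΨS_zpow_right m]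
  have h1 : (ΨS^m).left 1 = 1 := (ΨS_zpow_mem_K m).2 0
  have e1 : cS (Multiplicative.ofAdd (m, (0:ZMod 2)) * zρ) = AA m := by
    rw [zρ, mulQg, add_zero, zero_add, cS_at, if_pos rfl]
  have e2 : cS (Multiplicative.ofAdd (m, (0:ZMod 2)) * (zρ*zσ*zρ) * zσ⁻¹) = 1 := by
    rw [show (zρ*zσ*zρ : Qg) = Multiplicative.ofAdd ((1:ℤ), (0:ZMod 2)) from by decide,
      show (zσ⁻¹ : Qg) = Multiplicative.ofAdd ((-1:ℤ), (0:ZMod 2)) from by decide,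
      mulQg, mulQg, add_zero, add_zero, cS_at, if_neg (by decide)]
  have e3 : (ΨS^(-m)).left (Multiplicative.ofAdd (m, (0:ZMod 2)) * (zρ*zσ*zρ*zσ⁻¹)) = 1 := by
    rw [show (zρ*zσ*zρ*zσ⁻¹ : Qg) = 1 from by decide, mul_one]
    exact (ΨS_zpow_mem_K (-m)).2 m
  rw [h1, e1, e2, e3, one_mul, inv_one, mul_one, mul_one]

lemma Ψ_wf_left (m : ℤ) : (Ψ (wf 3 m 0)).left 1 = FF m := by
  rw [wf_eq m]
  simp only [map_mul, map_zpow, Ψ_s, Ψ_q, Ψ_p]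
  simp only [SemidirectProduct.mul_left, SemidirectProduct.mul_right,
    SemidirectProduct.inv_left, SemidirectProduct.inv_right, Pi.mul_apply, Pi.inv_apply,
    Pi.one_apply, tr_apply, leftP, leftQ, leftS, rightP, rightQ, rightS, one_mul, mul_one,
    map_one]
  rw [ΨS_zpow_right m]
  have h1 : (ΨS^m).left 1 = 1 := (ΨS_zpow_mem_K m).2 0
  have e1 : cQ (Multiplicative.ofAdd (m, (0:ZMod 2))) = FF m := by
    rw [cQ_at, if_neg (by decide)]
  have e3 : (ΨS^(-m)).left (Multiplicative.ofAdd (m, (0:ZMod 2)) * (zρ*zρ)) = 1 := by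
    rw [show (zρ*zρ : Qg) = 1 from by decide, mul_one]
    exact (ΨS_zpow_mem_K (-m)).2 m
  rw [h1, e1, e3, one_mul, mul_one]

def ψsub : (commutator (WB 3)) →* GP where
  toFun x := (Ψ (x : WB 3)).left 1
  map_one' := by
    show (Ψ (((1 : commutator (WB 3)) : WB 3))).left 1 = 1
    rw [OneMemClass.coe_one, map_one, SemidirectProduct.one_left, Pi.one_apply]
  map_mul' x y := by
    show (Ψ (((x * y : commutator (WB 3)) : WB 3))).left 1 =
      (Ψ (x : WB 3)).left 1 * (Ψ (y : WB 3)).left 1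
    have hx : (Ψ (x : WB 3)).right = 1 := by
      rw [rightΨ]
      have hker : (x : WB 3) ∈ Wproj.ker := comm_eq_ker ▸ x.2
      exact MonoidHom.mem_ker.mp hker
    rw [Subgroup.coe_mul, map_mul, SemidirectProduct.mul_left, Pi.mul_apply, tr_apply, hx,
      mul_one]

lemma ψΦid : ψsub.comp Φ' = MonoidHom.id GP := by
  apply PresentedGroup.ext
  rintro (m | m)
  · show (Ψ ((Φ' (PresentedGroup.of (Sum.inl m))) : WB 3)).left 1 = _
    have he : ((Φ' (PresentedGroup.of (Sum.inl m))) : WB 3) = wa 3 m := Φ_inl m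
    rw [he, Ψ_wa_left]
    rfl
  · show (Ψ ((Φ' (PresentedGroup.of (Sum.inr m))) : WB 3)).left 1 = _
    have he : ((Φ' (PresentedGroup.of (Sum.inr m))) : WB 3) = wf 3 m 0 := Φ_inr m
    rw [he, Ψ_wf_left]
    rfl

lemma Φ'_inj : Function.Injective Φ' := by
  have h : Function.LeftInverse ψsub Φ' := fun g => DFunLike.congr_fun ψΦid g
  exact h.injective

-- chunk 12 : final assembly
noncomputable def ΦIso : PresentedGroup wb3Rels ≃* ↥(commutator (WB 3)) :=
  MulEquiv.ofBijective Φ' ⟨Φ'_inj, Φ'_surj⟩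

lemma ΦIso_inl (m : ℤ) (h : wa 3 m ∈ commutator (WB 3)) :
    ΦIso (PresentedGroup.of (Sum.inl m)) = ⟨wa 3 m, h⟩ := by
  apply Subtype.ext
  exact Φ_inl m

lemma ΦIso_inr (m : ℤ) (h : wf 3 m 0 ∈ commutator (WB 3)) :
    ΦIso (PresentedGroup.of (Sum.inr m)) = ⟨wf 3 m 0, h⟩ := by
  apply Subtype.ext
  exact Φ_inr m


end WBP

/-- `WB_3'` is isomorphic to the presented group with generators
`A_m, F_m` (`m ∈ ℤ`) and the relators of `wb3Rels`, via `A_m ↦ a_m`, `F_m ↦ f_m`. -/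
theorem WB3_commutator_presentation :
    ∃ ha : ∀ m : ℤ, wa 3 m ∈ commutator (WB 3),
    ∃ hf : ∀ m : ℤ, wf 3 m 0 ∈ commutator (WB 3),
    ∃ φ : PresentedGroup wb3Rels ≃* ↥(commutator (WB 3)),
      (∀ m : ℤ, φ (PresentedGroup.of (Sum.inl m)) = ⟨wa 3 m, ha m⟩) ∧
      (∀ m : ℤ, φ (PresentedGroup.of (Sum.inr m)) = ⟨wf 3 m 0, hf m⟩) := by
  refine ⟨WBP.wa_mem_comm, WBP.wf_mem_comm, WBP.ΦIso, ?_, ?_⟩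
  · intro m; exact WBP.ΦIso_inl m (WBP.wa_mem_comm m)
  · intro m; exact WBP.ΦIso_inr m (WBP.wf_mem_comm m)
end

section
/- Let n ≥ 3. In VB_n the following identities hold for all m, i ∈ ℤ and ε ∈ {0,1}: (1) σ_1^m a_i σ_1^{−m} = a_{i+m}, σ_1^m b_{i,ε} σ_1^{−m} = b_{i+m,ε}, σ_1^m f_{i,ε} σ_1^{−m} = f_{i+m,ε}, and, when n ≥ 4 and 3 ≤ l ≤ n−1, σ_1^m c_l σ_1^{−m} = c_l and σ_1^m g_{i,l} σ_1^{−m} = g_{i+m,l}; (2) ρ_1 a_0 ρ_1 = a_0^{−1}, ρ_1 b_{0,0} ρ_1 = b_{0,1} a_0^{−1}, ρ_1 b_{0,1} ρ_1 = b_{0,0} a_0^{−1}, ρ_1 b_{1,0} ρ_1 = a_0 b_{1,1} a_1^{−1} a_0^{−1}, ρ_1 b_{2,0} ρ_1 = a_0 a_1 b_{2,1} a_2^{−1} a_1^{−1} a_0^{−1}; (3) ρ_1 f_{0,0} ρ_1 = f_{0,1}, ρ_1 f_{0,1} ρ_1 = f_{0,0}, ρ_1 f_{1,0} ρ_1 =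 a_0 f_{1,1} a_0^{−1}, ρ_1 f_{1,1} ρ_1 = a_0 f_{1,0} a_0^{−1}, and, when n ≥ 4 and 3 ≤ l ≤ n−1, ρ_1 c_l ρ_1 = c_l a_0^{−1}; (4) when n ≥ 4 and 3 ≤ l ≤ n−1, ρ_1 g_{0,l} ρ_1 = g_{0,l} and ρ_1 g_{1,l} ρ_1 = a_0 g_{1,l} a_0^{−1}. -/
/-!
Each of a_i, b_{i,ε}, f_{i,ε}, g_{i,l} is σ_1^i w σ_1^{-i} for a word w not depending on i, so
conjugating by σ_1^m shifts i by m, while c_l is fixed because σ_1 and σ_l commute. The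
ρ_1-conjugation rules are identities of free reduction modulo ρ_1² = 1; for c_l and g_{i,l} one
also moves ρ_1 past σ_l and ρ_l, which commute with it for l ≥ 3.
-/

open scoped commutatorElement

theorem zpow_mul_zpow_conj_mul_zpow_neg {G : Type*} [Group G] (s x : G) (m i : ℤ) :
    s ^ m * (s ^ i * x * s ^ (-i)) * s ^ (-m) = s ^ (i + m) * x * s ^ (-(i + m)) := by
  group

theorem Commute.zpow_mul_mul_zpow_neg {G : Type*} [Group G] {s x : G} (h : Commute s x)
    (m : ℤ) : s ^ m * x * s ^ (-m) = x := by
  rw [(h.zpow_left m).eq, mul_assoc, ← zpow_add, add_neg_cancel, zpow_zero, mul_one]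

section Relations

variable {n : ℕ}

theorem vρ_eq_one {i : ℕ} (h : ¬(1 ≤ i ∧ i ≤ n - 1)) : vρ n i = 1 := by
  rw [vρ, fρ, dif_neg (by omega), map_one]

@[simp]
theorem vρ_mul_self (n i : ℕ) : vρ n i * vρ n i = 1 := by
  by_cases hi : 1 ≤ i ∧ i ≤ n - 1
  · exact PresentedGroup.one_of_mem (Or.inr ⟨i, hi.1, hi.2, rfl⟩)
  · rw [vρ_eq_one hi, mul_one]

@[simp]
theorem vρ_inv (n i : ℕ) : (vρ n i)⁻¹ = vρ n i :=
  inv_eq_of_mul_eq_one_right (vρ_mul_self n i)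

@[simp]
theorem vρ_mul_vρ_mul (i : ℕ) (x : VB n) : vρ n i * (vρ n i * x) = x := by
  rw [← mul_assoc, vρ_mul_self, one_mul]

theorem commute_mk_of_commutatorElement_mem {x y : FreeGroup (VBGen n)}
    (h : ⁅x, y⁆ ∈ vbRels n) :
    Commute (PresentedGroup.mk (vbRels n) x) (PresentedGroup.mk (vbRels n) y) := by
  rw [← commutatorElement_eq_one_iff_commute, ← map_commutatorElement]
  exact PresentedGroup.one_of_mem h

theorem commute_vσ_vσ {i j : ℕ} (hi : 1 ≤ i) (hij : i + 2 ≤ j) (hj : j ≤ n - 1) :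
    Commute (vσ n i) (vσ n j) :=
  commute_mk_of_commutatorElement_mem (Or.inl (Or.inl ⟨i, j, hi, hij, hj, Or.inl rfl⟩))

theorem commute_vρ_vρ {i j : ℕ} (hi : 1 ≤ i) (hij : i + 2 ≤ j) (hj : j ≤ n - 1) :
    Commute (vρ n i) (vρ n j) :=
  commute_mk_of_commutatorElement_mem (Or.inl (Or.inl ⟨i, j, hi, hij, hj, Or.inr (Or.inl rfl)⟩))

theorem commute_vσ_vρ {i j : ℕ} (hi : 1 ≤ i) (hij : i + 2 ≤ j) (hj : j ≤ n - 1) :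
    Commute (vσ n j) (vρ n i) :=
  commute_mk_of_commutatorElement_mem
    (Or.inl (Or.inl ⟨i, j, hi, hij, hj, Or.inr (Or.inr (Or.inr rfl))⟩))

end Relations

section FarGenerators

variable {n l : ℕ}

theorem commute_vσ_one_vc (hl : 3 ≤ l) (hln : l ≤ n - 1) : Commute (vσ n 1) (vc n l) :=
  (commute_vσ_vσ le_rfl hl hln).mul_right (Commute.refl _).inv_right

theorem vρ_one_conj_vc (hl : 3 ≤ l) (hln : l ≤ n - 1) :
    vρ n 1 * vc n l * vρ n 1 = vc n l * (va n 0)⁻¹ := by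
  have h := (commute_vσ_vρ le_rfl hl hln).symm
  simp [va, vc, mul_assoc, h.left_comm]

theorem vρ_one_conj_vg_zero (hl : 3 ≤ l) (hln : l ≤ n - 1) :
    vρ n 1 * vg n 0 l * vρ n 1 = vg n 0 l := by
  have h := commute_vρ_vρ le_rfl hl hln
  simp [vg, h.left_comm]

theorem vρ_one_conj_vg_one (hl : 3 ≤ l) (hln : l ≤ n - 1) :
    vρ n 1 * vg n 1 l * vρ n 1 = va n 0 * vg n 1 l * (va n 0)⁻¹ := by
  have h := commute_vρ_vρ le_rfl hl hln
  simp [va, vg, mul_assoc, h.left_comm]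

end FarGenerators

theorem VB_conjugation_rules_general (n : ℕ) :
    (∀ m i : ℤ, (vσ n 1) ^ m * va n i * (vσ n 1) ^ (-m) = va n (i + m)) ∧
    (∀ m i : ℤ, ∀ ε : ℕ, ε ≤ 1 →
      (vσ n 1) ^ m * vb n i ε * (vσ n 1) ^ (-m) = vb n (i + m) ε) ∧
    (∀ m i : ℤ, ∀ ε : ℕ, ε ≤ 1 →
      (vσ n 1) ^ m * vf n i ε * (vσ n 1) ^ (-m) = vf n (i + m) ε) ∧
    (4 ≤ n → ∀ l : ℕ, 3 ≤ l → l ≤ n - 1 →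
      (∀ m : ℤ, (vσ n 1) ^ m * vc n l * (vσ n 1) ^ (-m) = vc n l) ∧
      (∀ m i : ℤ, (vσ n 1) ^ m * vg n i l * (vσ n 1) ^ (-m) = vg n (i + m) l)) ∧
    vρ n 1 * va n 0 * vρ n 1 = (va n 0)⁻¹ ∧
    vρ n 1 * vb n 0 0 * vρ n 1 = vb n 0 1 * (va n 0)⁻¹ ∧
    vρ n 1 * vb n 0 1 * vρ n 1 = vb n 0 0 * (va n 0)⁻¹ ∧
    vρ n 1 * vb n 1 0 * vρ n 1 = va n 0 * vb n 1 1 * (va n 1)⁻¹ * (va n 0)⁻¹ ∧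
    vρ n 1 * vb n 2 0 * vρ n 1 =
      va n 0 * va n 1 * vb n 2 1 * (va n 2)⁻¹ * (va n 1)⁻¹ * (va n 0)⁻¹ ∧
    vρ n 1 * vf n 0 0 * vρ n 1 = vf n 0 1 ∧
    vρ n 1 * vf n 0 1 * vρ n 1 = vf n 0 0 ∧
    vρ n 1 * vf n 1 0 * vρ n 1 = va n 0 * vf n 1 1 * (va n 0)⁻¹ ∧
    vρ n 1 * vf n 1 1 * vρ n 1 = va n 0 * vf n 1 0 * (va n 0)⁻¹ ∧
    (4 ≤ n → ∀ l : ℕ, 3 ≤ l → l ≤ n - 1 →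
      vρ n 1 * vc n l * vρ n 1 = vc n l * (va n 0)⁻¹ ∧
      vρ n 1 * vg n 0 l * vρ n 1 = vg n 0 l ∧
      vρ n 1 * vg n 1 l * vρ n 1 = va n 0 * vg n 1 l * (va n 0)⁻¹) := by
  have shift := zpow_mul_zpow_conj_mul_zpow_neg (vσ n 1)
  refine ⟨fun m i => shift _ m i, fun m i _ _ => shift _ m i, fun m i _ _ => shift _ m i,
    fun _ l hl hln =>
      ⟨(commute_vσ_one_vc hl hln).zpow_mul_mul_zpow_neg, fun m i => shift _ m i⟩,
    ?_, ?_, ?_, ?_, ?_, ?_, ?_, ?_, ?_,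
    fun _ l hl hln => ⟨vρ_one_conj_vc hl hln, vρ_one_conj_vg_zero hl hln,
      vρ_one_conj_vg_one hl hln⟩⟩
  all_goals simp [va, vb, vf, mul_assoc, pow_two]

/-- the conjugation rules of Lemma 1 in `VB_n`, `n ≥ 3`. -/
theorem VB_conjugation_rules (n : ℕ) (hn : 3 ≤ n) :
    (∀ m i : ℤ, (vσ n 1) ^ m * va n i * (vσ n 1) ^ (-m) = va n (i + m)) ∧
    (∀ m i : ℤ, ∀ ε : ℕ, ε ≤ 1 →
      (vσ n 1) ^ m * vb n i ε * (vσ n 1) ^ (-m) = vb n (i + m) ε) ∧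
    (∀ m i : ℤ, ∀ ε : ℕ, ε ≤ 1 →
      (vσ n 1) ^ m * vf n i ε * (vσ n 1) ^ (-m) = vf n (i + m) ε) ∧
    (4 ≤ n → ∀ l : ℕ, 3 ≤ l → l ≤ n - 1 →
      (∀ m : ℤ, (vσ n 1) ^ m * vc n l * (vσ n 1) ^ (-m) = vc n l) ∧
      (∀ m i : ℤ, (vσ n 1) ^ m * vg n i l * (vσ n 1) ^ (-m) = vg n (i + m) l)) ∧
    vρ n 1 * va n 0 * vρ n 1 = (va n 0)⁻¹ ∧
    vρ n 1 * vb n 0 0 * vρ n 1 = vb n 0 1 * (va n 0)⁻¹ ∧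
    vρ n 1 * vb n 0 1 * vρ n 1 = vb n 0 0 * (va n 0)⁻¹ ∧
    vρ n 1 * vb n 1 0 * vρ n 1 = va n 0 * vb n 1 1 * (va n 1)⁻¹ * (va n 0)⁻¹ ∧
    vρ n 1 * vb n 2 0 * vρ n 1 =
      va n 0 * va n 1 * vb n 2 1 * (va n 2)⁻¹ * (va n 1)⁻¹ * (va n 0)⁻¹ ∧
    vρ n 1 * vf n 0 0 * vρ n 1 = vf n 0 1 ∧
    vρ n 1 * vf n 0 1 * vρ n 1 = vf n 0 0 ∧
    vρ n 1 * vf n 1 0 * vρ n 1 = va n 0 * vf n 1 1 * (va n 0)⁻¹ ∧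
    vρ n 1 * vf n 1 1 * vρ n 1 = va n 0 * vf n 1 0 * (va n 0)⁻¹ ∧
    (4 ≤ n → ∀ l : ℕ, 3 ≤ l → l ≤ n - 1 →
      vρ n 1 * vc n l * vρ n 1 = vc n l * (va n 0)⁻¹ ∧
      vρ n 1 * vg n 0 l * vρ n 1 = vg n 0 l ∧
      vρ n 1 * vg n 1 l * vρ n 1 = va n 0 * vg n 1 l * (va n 0)⁻¹) :=
  VB_conjugation_rules_general n
end

section
/- Let n ≥ 3. In the welded braid group WB_n the following identities hold among the images of the listed elements: ρ_1 a_1 ρ_1 = a_0 a_1^{−1} a_0^{−1}; ρ_1 f_{2,1} ρ_1 = a_0 a_1 f_{2,0} a_1^{−1} a_0^{−1}; and, when n ≥ 4, for every l with 3 ≤ l ≤ n−1, ρ_1 g_{2,l} ρ_1 = a_0 a_1 g_{2,l} a_1^{−1} a_0^{−1}. -/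
/-!
Conjugation by the involution `p = ρ₁` swaps `s = σ₁` and `t = p s p`. Writing
`a_m = s^m (t s⁻¹) s^{-m}`, the first rule becomes an identity of the free group on `s, t`.
Moreover `a₀ a₁ = t² s⁻²`, so conjugating `s² y s⁻²` by `p` gives `t² (p y p) t⁻²`, which is
`s² (p y p) s⁻²` conjugated by `a₀ a₁`; for `f_{2,1}` and `g_{2,l}` it remains to compute
`p y p`, using `ρ₁² = 1` and `ρ₁ ρ_l = ρ_l ρ₁`.
-/

section Involution

variable {G : Type*} [Group G]

def zpowConj (s : G) (m : ℤ) (x : G) : G := s ^ m * x * s ^ (-m)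

def aElt (s p : G) (m : ℤ) : G := zpowConj s m (p * s * p * s⁻¹)

lemma MulAut.conj_zpowConj (g s x : G) (m : ℤ) :
    MulAut.conj g (zpowConj s m x) = zpowConj (MulAut.conj g s) m (MulAut.conj g x) := by
  simp only [zpowConj, map_mul, map_zpow]

variable {p : G} (hp : p * p = 1)
include hp

lemma mul_mul_eq_conj_of_mul_self (x : G) : p * x * p = MulAut.conj p x := by
  rw [MulAut.conj_apply, inv_eq_of_mul_eq_one_right hp]

lemma mul_zpowConj_mul_of_mul_self (s x : G) (m : ℤ) :
    p * zpowConj s m x * p = zpowConj (p * s * p) m (p * x * p) := by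
  simp only [mul_mul_eq_conj_of_mul_self hp, MulAut.conj_zpowConj]

lemma mul_aElt_one_mul_of_mul_self (s : G) :
    p * aElt s p 1 * p = aElt s p 0 * (aElt s p 1)⁻¹ * (aElt s p 0)⁻¹ := by
  have hx : p * (p * s * p * s⁻¹) * p = s * (p * s * p)⁻¹ := by
    simp only [mul_inv_rev, inv_eq_of_mul_eq_one_right hp, ← mul_assoc, hp, one_mul]
  rw [aElt, mul_zpowConj_mul_of_mul_self hp, hx]
  simp only [aElt, zpowConj]
  generalize p * s * p = t
  group

lemma mul_zpowConj_two_mul_of_mul_self (s : G) {y z : G} (hyz : p * y * p = z) :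
    p * zpowConj s 2 y * p =
      aElt s p 0 * aElt s p 1 * zpowConj s 2 z * (aElt s p 1)⁻¹ * (aElt s p 0)⁻¹ := by
  rw [mul_zpowConj_mul_of_mul_self hp, hyz]
  simp only [aElt, zpowConj, zpow_neg, zpow_two]
  generalize p * s * p = t
  group

end Involution

lemma wρ_mul_self (n i : ℕ) : wρ n i * wρ n i = 1 := by
  rw [wρ, ← map_mul]
  by_cases h : 1 ≤ i ∧ i - 1 < n - 1
  · exact PresentedGroup.one_of_mem (Or.inl (Or.inr ⟨i, h.1, by omega, rfl⟩))
  · rw [fρ, dif_neg h, mul_one, map_one]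

lemma wρ_mul_comm {n i j : ℕ} (hi : 1 ≤ i) (hij : i + 2 ≤ j) (hj : j ≤ n - 1) :
    wρ n i * wρ n j = wρ n j * wρ n i := by
  have h : wρ n i * wρ n j * (wρ n i)⁻¹ * (wρ n j)⁻¹ = 1 := by
    simp only [wρ, ← map_inv, ← map_mul]
    exact PresentedGroup.one_of_mem
      (Or.inl (Or.inl (Or.inl ⟨i, j, hi, hij, hj, Or.inr (Or.inl rfl)⟩)))
  rwa [mul_assoc, ← mul_inv_rev, mul_inv_eq_one] at h

theorem WB_conjugation_rules_general (n : ℕ) :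
    wρ n 1 * wa n 1 * wρ n 1 = wa n 0 * (wa n 1)⁻¹ * (wa n 0)⁻¹ ∧
    wρ n 1 * wf n 2 1 * wρ n 1 = wa n 0 * wa n 1 * wf n 2 0 * (wa n 1)⁻¹ * (wa n 0)⁻¹ ∧
    (4 ≤ n → ∀ l : ℕ, 3 ≤ l → l ≤ n - 1 →
      wρ n 1 * wg n 2 l * wρ n 1 = wa n 0 * wa n 1 * wg n 2 l * (wa n 1)⁻¹ * (wa n 0)⁻¹) := by
  have hp := wρ_mul_self n 1
  refine ⟨mul_aElt_one_mul_of_mul_self hp (wσ n 1), ?_, fun _ l hl hln => ?_⟩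
  · refine mul_zpowConj_two_mul_of_mul_self hp (wσ n 1) ?_
    simp only [pow_zero, pow_one, zero_add, one_add_one_eq_two, pow_two, hp, mul_one, one_mul,
      ← mul_assoc]
  · have hcomm := wρ_mul_comm le_rfl hl hln
    refine mul_zpowConj_two_mul_of_mul_self hp (wσ n 1) ?_
    rw [mul_assoc, mul_assoc, hp, mul_one, hcomm]

/-- the conjugation rules of Lemma 5.1 in `WB_n`, `n ≥ 3`. -/
theorem WB_conjugation_rules (n : ℕ) (hn : 3 ≤ n) :
    wρ n 1 * wa n 1 * wρ n 1 = wa n 0 * (wa n 1)⁻¹ * (wa n 0)⁻¹ ∧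
    wρ n 1 * wf n 2 1 * wρ n 1 = wa n 0 * wa n 1 * wf n 2 0 * (wa n 1)⁻¹ * (wa n 0)⁻¹ ∧
    (4 ≤ n → ∀ l : ℕ, 3 ≤ l → l ≤ n - 1 →
      wρ n 1 * wg n 2 l * wρ n 1 = wa n 0 * wa n 1 * wg n 2 l * (wa n 1)⁻¹ * (wa n 0)⁻¹) :=
  WB_conjugation_rules_general n
end
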